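/- arXiv:2207.01838 — 9 statements merged into one kernel-verified Lean document; each statement's English description precedes it below -/
import Mathlib

section
/- For every m ≥ 1, the doubled Odd graph 2.O_{m+1} is connected, and for all vertices y, z ∈ X the graph distance satisfies ∂(y,z) = |y| + |z| − 2|y ∩ z| (equivalently, ∂(y,z) equals the cardinality of the symmetric difference of y and z). -/
/-- The vertex set of the doubled Odd graph `2.O_{m+1}`: all subsets of
`S = Fin (2m+1)` of cardinality `m` or `m+1`. -/
def DoubledOddVertex (m : ℕ) := {y : Finset (Fin (2*m+1)) // y.card = m ∨ y.card = m+1}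

/-- The doubled Odd graph `2.O_{m+1}`: two distinct vertices are adjacent iff
one is a (strict) subset of the other. -/
def doubledOddGraph (m : ℕ) : SimpleGraph (DoubledOddVertex m) where
  Adj y z := y.val ⊂ z.val ∨ z.val ⊂ y.val
  symm := ⟨fun _ _ h => Or.symm h⟩
  loopless := ⟨fun y h => by cases h <;> exact absurd ‹_› (ssubset_irrefl y.val)⟩

open Finset SimpleGraph

lemma adj_symmDiff_card {m : ℕ} {y z : DoubledOddVertex m}
    (h : (doubledOddGraph m).Adj y z) : (symmDiff y.val z.val).card = 1 := by
  have hy := y.prop; have hz := z.prop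
  cases h with
  | inl h =>
    have hc := Finset.card_lt_card h
    rw [symmDiff_of_le h.subset, Finset.card_sdiff_of_subset h.subset]
    omega
  | inr h =>
    have hc := Finset.card_lt_card h
    rw [symmDiff_of_ge h.subset, Finset.card_sdiff_of_subset h.subset]
    omega

lemma lower_bound {m : ℕ} {y z : DoubledOddVertex m} (w : (doubledOddGraph m).Walk y z) :
    (symmDiff y.val z.val).card ≤ w.length := by
  induction w with
  | nil => simp [symmDiff_self]
  | @cons a b c h p ih =>
    have h1 := adj_symmDiff_card h
    have htri : symmDiff a.val c.val ⊆ symmDiff a.val b.val ∪ symmDiff b.val c.val :=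
      symmDiff_triangle a.val b.val c.val
    have := (Finset.card_le_card htri).trans (Finset.card_union_le _ _)
    simp only [SimpleGraph.Walk.length_cons]
    omega

lemma exists_walk {m : ℕ} : ∀ (n : ℕ) (y z : DoubledOddVertex m),
    (symmDiff y.val z.val).card = n →
    ∃ w : (doubledOddGraph m).Walk y z, w.length = n := by
  intro n
  induction n with
  | zero =>
    intro y z h
    have : y.val = z.val := by
      have h0 : symmDiff y.val z.val = ∅ := Finset.card_eq_zero.mp h
      exact symmDiff_eq_bot.mp (by rw [h0]; rfl)
    have : y = z := Subtype.ext this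
    subst this
    exact ⟨SimpleGraph.Walk.nil, rfl⟩
  | succ n ih =>
    intro y z h
    have hy := y.prop; have hz := z.prop
    have hne : y.val ≠ z.val := by
      intro he
      rw [he, symmDiff_self] at h
      simp at h
    rcases hy with hy | hy
    · -- |y| = m : pick a ∈ z \ y
      have hnz : (z.val \ y.val).Nonempty := by
        rw [Finset.sdiff_nonempty]
        intro hsub
        exact hne (Finset.eq_of_subset_of_card_le hsub (by omega)).symm
      obtain ⟨a, ha⟩ := hnz
      rw [Finset.mem_sdiff] at ha
      obtain ⟨haz, hay⟩ := ha
      have hcard : (insert a y.val).card = m + 1 := by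
        rw [Finset.card_insert_of_notMem hay, hy]
      refine ?_
      set w : DoubledOddVertex m := ⟨insert a y.val, Or.inr hcard⟩ with hw
      have hadj : (doubledOddGraph m).Adj y w :=
        Or.inl (Finset.ssubset_insert hay)
      have hsd : symmDiff w.val z.val = (symmDiff y.val z.val).erase a := by
        ext x
        by_cases hxa : x = a <;>
          simp [Finset.mem_symmDiff, Finset.mem_erase, Finset.mem_insert, hxa, haz, hay, hw] <;>
          tauto
      have hmem : a ∈ symmDiff y.val z.val := by
        simp [Finset.mem_symmDiff, haz, hay]
      have hcard' : (symmDiff w.val z.val).card = n := by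
        rw [hsd, Finset.card_erase_of_mem hmem, h]; omega
      obtain ⟨p, hp⟩ := ih w z hcard'
      exact ⟨SimpleGraph.Walk.cons hadj p, by simp [hp]⟩
    · -- |y| = m+1 : pick a ∈ y \ z
      have hnz : (y.val \ z.val).Nonempty := by
        rw [Finset.sdiff_nonempty]
        intro hsub
        exact hne (Finset.eq_of_subset_of_card_le hsub (by omega))
      obtain ⟨a, ha⟩ := hnz
      rw [Finset.mem_sdiff] at ha
      obtain ⟨hay, haz⟩ := ha
      have hcard : (y.val.erase a).card = m := by
        rw [Finset.card_erase_of_mem hay, hy]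
        omega
      set w : DoubledOddVertex m := ⟨y.val.erase a, Or.inl hcard⟩ with hw
      have hadj : (doubledOddGraph m).Adj y w :=
        Or.inr (Finset.erase_ssubset hay)
      have hsd : symmDiff w.val z.val = (symmDiff y.val z.val).erase a := by
        ext x
        by_cases hxa : x = a <;>
          simp [Finset.mem_symmDiff, Finset.mem_erase, hxa, haz, hay, hw] <;>
          tauto
      have hmem : a ∈ symmDiff y.val z.val := by
        simp [Finset.mem_symmDiff, haz, hay]
      have hcard' : (symmDiff w.val z.val).card = n := by
        rw [hsd, Finset.card_erase_of_mem hmem, h]; omega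
      obtain ⟨p, hp⟩ := ih w z hcard'
      exact ⟨SimpleGraph.Walk.cons hadj p, by simp [hp]⟩

theorem stmt_0 (m : ℕ) (hm : 1 ≤ m) :
    (doubledOddGraph m).Connected ∧
    ∀ y z : DoubledOddVertex m,
      ((doubledOddGraph m).dist y z : ℤ) =
        (y.val.card : ℤ) + (z.val.card : ℤ) - 2 * ((y.val ∩ z.val).card : ℤ) ∧
      (doubledOddGraph m).dist y z = (symmDiff y.val z.val).card := by
  have hdist : ∀ y z : DoubledOddVertex m,
      (doubledOddGraph m).dist y z = (symmDiff y.val z.val).card := by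
    intro y z
    obtain ⟨p, hp⟩ := exists_walk _ y z rfl
    have h1 : (doubledOddGraph m).dist y z ≤ (symmDiff y.val z.val).card :=
      hp ▸ SimpleGraph.dist_le p
    have hr : (doubledOddGraph m).Reachable y z := ⟨p⟩
    obtain ⟨q, hq⟩ := hr.exists_walk_length_eq_dist
    have h2 := lower_bound q
    omega
  have hconn : (doubledOddGraph m).Connected := by
    have : Nonempty (DoubledOddVertex m) := by
      obtain ⟨t, _, ht⟩ := Finset.exists_subset_card_eq
        (show m ≤ (Finset.univ : Finset (Fin (2*m+1))).card by simp; omega)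
      exact ⟨⟨t, Or.inl ht⟩⟩
    refine ⟨fun y z => ?_⟩
    obtain ⟨p, _⟩ := exists_walk _ y z rfl
    exact ⟨p⟩
  refine ⟨hconn, fun y z => ⟨?_, hdist y z⟩⟩
  rw [hdist y z]
  have hsd : (symmDiff y.val z.val).card + (y.val ∩ z.val).card = (y.val ∪ z.val).card := by
    rw [← Finset.card_union_of_disjoint]
    · congr 1
      ext x; simp [Finset.mem_symmDiff]; tauto
    · simp [Finset.disjoint_left, Finset.mem_symmDiff]
      tauto
  have hui := Finset.card_union_add_card_inter y.val z.val
  have h1 : (y.val ∩ z.val).card ≤ y.val.card := Finset.card_le_card Finset.inter_subset_left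
  push_cast
  omega
end

section
/- For every m ≥ 1, the set I_{(m,m)} := { ρ(y,z) : y, z ⊆ S with |y| = |z| = m } equals the set of integer quadruples (i,j,t,p) satisfying 0 ≤ i,j ≤ m, max(i+j−m, m−1−i−j) ≤ t ≤ m−|i−j|, and max(0, i+j−m, i+t−m, j+t−m) ≤ p ≤ min(i, j, t, i+j+t+1−m). Moreover, the cardinality of I_{(m,m)} is the binomial coefficient C(m+4, 4). -/
/-- The quadruple `ρ(y,z) = (|x0∩y|, |x0∩z|, |y∩z|, |x0∩y∩z|)`, with entries
viewed as integers. -/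
def rho {n : ℕ} (x0 y z : Finset (Fin n)) : ℤ × ℤ × ℤ × ℤ :=
  (((x0 ∩ y).card : ℤ), ((x0 ∩ z).card : ℤ), ((y ∩ z).card : ℤ),
    ((x0 ∩ y ∩ z).card : ℤ))

open Finset

abbrev N4 := ℕ × ℕ × ℕ × ℕ
abbrev N3 := ℕ × ℕ × ℕ

def box3 (n : ℕ) : Finset N3 := range (n+1) ×ˢ range (n+1) ×ˢ range (n+1)
def box4 (n : ℕ) : Finset N4 := range (n+1) ×ˢ range (n+1) ×ˢ range (n+1) ×ˢ range (n+1)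

def A3 (k : ℕ) : Finset N3 := (box3 k).filter (fun x => x.1 + x.2.1 + x.2.2 = k)

def R3 (n : ℕ) : Finset N3 := (box3 n).filter
  (fun x => x.1 + x.2.1 ≤ n ∧ x.1 + x.2.2 ≤ n ∧ x.2.1 + x.2.2 ≤ n ∧ n ≤ x.1 + x.2.1 + x.2.2 + 1)

def Mset (n : ℕ) : Finset N3 := (box3 n).filter
  (fun x => x.1 + x.2.1 + x.2.2 = n ∧ (x.1 = 0 ∨ x.2.1 = 0 ∨ x.2.2 = 0))

def Ep (m : ℕ) : Finset N4 := (box4 m).filter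
  (fun x => 1 ≤ x.1 ∧ 2*x.1 + x.2.1 + x.2.2.1 + x.2.2.2 + 1 = m)

def R4 (m : ℕ) : Finset N4 := (box4 m).filter
  (fun x => x.1 + x.2.1 + x.2.2.1 ≤ m ∧ x.1 + x.2.1 + x.2.2.2 ≤ m ∧
    x.1 + x.2.2.1 + x.2.2.2 ≤ m ∧ m ≤ 2*x.1 + x.2.1 + x.2.2.1 + x.2.2.2 + 1)

lemma mem_A3 {k : ℕ} {x : N3} : x ∈ A3 k ↔ x.1 + x.2.1 + x.2.2 = k := by
  simp [A3, box3, mem_filter, mem_product, Nat.lt_succ_iff]; omega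

lemma mem_R3 {n : ℕ} {x : N3} : x ∈ R3 n ↔
    x.1 + x.2.1 ≤ n ∧ x.1 + x.2.2 ≤ n ∧ x.2.1 + x.2.2 ≤ n ∧ n ≤ x.1 + x.2.1 + x.2.2 + 1 := by
  simp [R3, box3, mem_filter, mem_product, Nat.lt_succ_iff]; omega

lemma mem_Mset {n : ℕ} {x : N3} : x ∈ Mset n ↔
    x.1 + x.2.1 + x.2.2 = n ∧ (x.1 = 0 ∨ x.2.1 = 0 ∨ x.2.2 = 0) := by
  simp [Mset, box3, mem_filter, mem_product, Nat.lt_succ_iff]; omega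

lemma mem_Ep {m : ℕ} {x : N4} : x ∈ Ep m ↔
    1 ≤ x.1 ∧ 2*x.1 + x.2.1 + x.2.2.1 + x.2.2.2 + 1 = m := by
  simp [Ep, box4, mem_filter, mem_product, Nat.lt_succ_iff]; omega

lemma mem_R4 {m : ℕ} {x : N4} : x ∈ R4 m ↔
    x.1 + x.2.1 + x.2.2.1 ≤ m ∧ x.1 + x.2.1 + x.2.2.2 ≤ m ∧
    x.1 + x.2.2.1 + x.2.2.2 ≤ m ∧ m ≤ 2*x.1 + x.2.1 + x.2.2.1 + x.2.2.2 + 1 := by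
  simp [R4, box4, mem_filter, mem_product, Nat.lt_succ_iff]; omega

lemma card_A3 (k : ℕ) : (A3 k).card = (k+2).choose 2 := by
  induction k with
  | zero => decide
  | succ k ih =>
    have hsub : (A3 (k+1)).filter (fun x => x.1 = 0) ⊆ A3 (k+1) := filter_subset _ _
    have h0 : ((A3 (k+1)).filter (fun x => x.1 = 0)).card = k+2 := by
      rw [Finset.card_nbij' (i := fun x : N3 => x.2.1) (j := fun c => (0, c, k+1-c))
        (t := range (k+2))]
      · exact Finset.card_range _
      · intro a ha; simp only [mem_coe, mem_filter, mem_A3] at ha; simp [mem_range]; omega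
      · intro a ha; simp only [mem_coe, mem_range] at ha; simp only [mem_coe, mem_filter, mem_A3]
        refine ⟨by omega, trivial⟩
      · intro a ha; simp only [mem_coe, mem_filter, mem_A3] at ha
        obtain ⟨x1, x2, x3⟩ := a; simp_all <;> omega
      · intro a ha; rfl
    have h1 : ((A3 (k+1)) \ ((A3 (k+1)).filter (fun x => x.1 = 0))).card = (A3 k).card := by
      rw [Finset.card_nbij' (i := fun x : N3 => (x.1 - 1, x.2)) (j := fun x : N3 => (x.1 + 1, x.2))]
      · intro a ha; simp only [mem_coe, mem_sdiff, mem_filter, mem_A3] at ha ⊢; omega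
      · intro a ha; simp only [mem_coe, mem_sdiff, mem_filter, mem_A3] at ha ⊢; omega
      · intro a ha; simp only [mem_coe, mem_sdiff, mem_filter, mem_A3] at ha
        obtain ⟨x1, x2, x3⟩ := a; simp_all <;> omega
      · intro a ha; rfl
    have := Finset.card_sdiff_add_card_eq_card hsub
    have hp : (k+1+2).choose 2 = (k+2).choose 2 + (k+2) := by
      rw [show k+1+2 = (k+2)+1 from rfl, Nat.choose_succ_succ]
      simp [Nat.choose_one_right]; omega
    omega

lemma card_R3_step {n : ℕ} (hn : 2 ≤ n) :
    (R3 n).card = (R3 (n-2)).card + (A3 (n-1)).card + (Mset n).card := by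
  have hdisj : Disjoint (A3 (n-1)) (Mset n) := by
    rw [Finset.disjoint_left]; intro a h1 h2
    rw [mem_A3] at h1; rw [mem_Mset] at h2; omega
  have hsub : A3 (n-1) ∪ Mset n ⊆ R3 n := by
    intro a ha; rw [mem_union, mem_A3, mem_Mset] at ha; rw [mem_R3]; omega
  have h1 : ((R3 n) \ (A3 (n-1) ∪ Mset n)).card = (R3 (n-2)).card := by
    rw [Finset.card_nbij' (i := fun x : N3 => (x.1 - 1, x.2.1 - 1, x.2.2 - 1))
      (j := fun x : N3 => (x.1 + 1, x.2.1 + 1, x.2.2 + 1))]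
    · intro a ha
      simp only [mem_coe, mem_sdiff, mem_union, mem_A3, mem_Mset, mem_R3] at ha ⊢; omega
    · intro a ha
      simp only [mem_coe, mem_sdiff, mem_union, mem_A3, mem_Mset, mem_R3] at ha ⊢; omega
    · intro a ha
      simp only [mem_coe, mem_sdiff, mem_union, mem_A3, mem_Mset, mem_R3] at ha
      obtain ⟨x1, x2, x3⟩ := a; simp_all <;> omega
    · intro a ha; rfl
  have h2 := Finset.card_sdiff_add_card_eq_card hsub
  rw [Finset.card_union_of_disjoint hdisj] at h2
  omega

lemma card_Mset_add {n : ℕ} (hn : 3 ≤ n) :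
    (Mset n).card + (A3 (n-3)).card = (n+2).choose 2 := by
  have hsub : Mset n ⊆ A3 n := by
    intro a ha; rw [mem_Mset] at ha; rw [mem_A3]; omega
  have h1 : ((A3 n) \ Mset n).card = (A3 (n-3)).card := by
    rw [Finset.card_nbij' (i := fun x : N3 => (x.1 - 1, x.2.1 - 1, x.2.2 - 1))
      (j := fun x : N3 => (x.1 + 1, x.2.1 + 1, x.2.2 + 1))]
    · intro a ha; simp only [mem_coe, mem_sdiff, mem_Mset, mem_A3] at ha ⊢; omega
    · intro a ha; simp only [mem_coe, mem_sdiff, mem_Mset, mem_A3] at ha ⊢; omega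
    · intro a ha; simp only [mem_coe, mem_sdiff, mem_Mset, mem_A3] at ha
      obtain ⟨x1, x2, x3⟩ := a; simp_all <;> omega
    · intro a ha; rfl
  have h2 := Finset.card_sdiff_add_card_eq_card hsub
  rw [card_A3] at h2
  rw [h1, card_A3] at h2
  rw [card_A3]
  omega

lemma card_Ep_step {m : ℕ} (hm : 3 ≤ m) :
    (Ep m).card = (Ep (m-2)).card + (A3 (m-3)).card := by
  have hsub : (Ep m).filter (fun x => x.1 = 1) ⊆ Ep m := filter_subset _ _
  have h0 : ((Ep m).filter (fun x => x.1 = 1)).card = (A3 (m-3)).card := by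
    rw [Finset.card_nbij' (i := fun x : N4 => x.2) (j := fun x : N3 => (1, x))]
    · intro a ha; simp only [mem_coe, mem_filter, mem_Ep] at ha; simp only [mem_coe, mem_A3]; omega
    · intro a ha; rw [mem_coe, mem_A3] at ha; simp only [mem_coe, mem_filter, mem_Ep]
      refine ⟨⟨le_refl 1, by omega⟩, trivial⟩
    · intro a ha; simp only [mem_coe, mem_filter, mem_Ep] at ha
      obtain ⟨x1, x2⟩ := a; simp_all <;> omega
    · intro a ha; rfl
  have h1 : ((Ep m) \ ((Ep m).filter (fun x => x.1 = 1))).card = (Ep (m-2)).card := by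
    rw [Finset.card_nbij' (i := fun x : N4 => (x.1 - 1, x.2)) (j := fun x : N4 => (x.1 + 1, x.2))]
    · intro a ha; simp only [mem_coe, mem_sdiff, mem_filter, mem_Ep] at ha ⊢; omega
    · intro a ha; simp only [mem_coe, mem_sdiff, mem_filter, mem_Ep] at ha ⊢; omega
    · intro a ha; simp only [mem_coe, mem_sdiff, mem_filter, mem_Ep] at ha
      obtain ⟨x1, x2⟩ := a; simp_all <;> omega
    · intro a ha; rfl
  have h2 := Finset.card_sdiff_add_card_eq_card hsub
  omega

lemma F_eq : ∀ m : ℕ, (R3 m).card + (Ep m).card = (m+3).choose 3 := by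
  intro m
  induction m using Nat.strong_induction_on with
  | _ m ih =>
    match m, ih with
    | 0, _ => decide
    | 1, _ => decide
    | 2, _ => decide
    | (k+3), ih =>
      have h1 := card_R3_step (n := k+3) (by omega)
      have h2 := card_Ep_step (m := k+3) (by omega)
      have h3 := card_Mset_add (n := k+3) (by omega)
      have h4 := ih (k+1) (by omega)
      simp only [show k+3-2 = k+1 from rfl, show k+3-1 = k+2 from rfl,
        show k+3-3 = k from rfl] at h1 h2 h3
      rw [card_A3] at h1
      have e1 := Nat.choose_succ_succ (k+5) 2
      have e2 := Nat.choose_succ_succ (k+4) 2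
      simp only [Nat.succ_eq_add_one] at e1 e2
      simp only [show k+4+1 = k+5 from by omega, show k+5+1 = k+6 from by omega,
        show k+3+3 = k+6 from by omega, show k+3+2 = k+5 from by omega, show 2+1 = 3 from rfl,
        show k+2+2 = k+4 from by omega, show k+1+3 = k+4 from by omega] at h1 h2 h3 h4 e1 e2 ⊢
      omega

lemma card_R4_step {m : ℕ} (hm : 1 ≤ m) :
    (R4 m).card = (R4 (m-1)).card + (R3 m).card + (Ep m).card := by
  have hT2 : ((R4 m).filter (fun x => x.1 = 0)).card = (R3 m).card := by
    rw [Finset.card_nbij' (i := fun x : N4 => x.2) (j := fun x : N3 => (0, x))]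
    · intro a ha; simp only [mem_coe, mem_filter, mem_R4] at ha; simp only [mem_coe, mem_R3]; omega
    · intro a ha; rw [mem_coe, mem_R3] at ha; simp only [mem_coe, mem_filter, mem_R4]
      refine ⟨by omega, trivial⟩
    · intro a ha; simp only [mem_coe, mem_filter, mem_R4] at ha
      obtain ⟨x1, x2⟩ := a; simp_all <;> omega
    · intro a ha; rfl
  have hEp : (R4 m).filter (fun x => 1 ≤ x.1 ∧ 2*x.1 + x.2.1 + x.2.2.1 + x.2.2.2 + 1 = m)
      = Ep m := by
    ext a; simp only [mem_filter, mem_R4, mem_Ep]; omega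
  have hdisj : Disjoint ((R4 m).filter (fun x => x.1 = 0)) (Ep m) := by
    rw [Finset.disjoint_left]; intro a h1 h2
    simp only [mem_filter] at h1; rw [mem_Ep] at h2; omega
  have hsub : ((R4 m).filter (fun x => x.1 = 0)) ∪ Ep m ⊆ R4 m := by
    intro a ha; rw [mem_union] at ha
    rcases ha with h | h
    · exact mem_of_mem_filter _ h
    · rw [mem_Ep] at h; rw [mem_R4]; omega
  have h1 : ((R4 m) \ (((R4 m).filter (fun x => x.1 = 0)) ∪ Ep m)).card = (R4 (m-1)).card := by
    rw [Finset.card_nbij' (i := fun x : N4 => (x.1 - 1, x.2)) (j := fun x : N4 => (x.1 + 1, x.2))]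
    · intro a ha
      simp only [mem_coe, mem_sdiff, mem_union, mem_filter, mem_Ep, mem_R4] at ha ⊢; omega
    · intro a ha
      simp only [mem_coe, mem_sdiff, mem_union, mem_filter, mem_Ep, mem_R4] at ha ⊢; omega
    · intro a ha
      simp only [mem_coe, mem_sdiff, mem_union, mem_filter, mem_Ep, mem_R4] at ha
      obtain ⟨x1, x2⟩ := a; simp_all <;> omega
    · intro a ha; rfl
  have h2 := Finset.card_sdiff_add_card_eq_card hsub
  rw [Finset.card_union_of_disjoint hdisj] at h2
  omega

lemma card_R4 (m : ℕ) : (R4 m).card = (m+4).choose 4 := by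
  induction m with
  | zero => decide
  | succ k ih =>
    have h1 := card_R4_step (m := k+1) (by omega)
    have h2 := F_eq (k+1)
    simp only [show k+1-1 = k from rfl] at h1
    have hp : (k+1+4).choose 4 = (k+4).choose 4 + (k+1+3).choose 3 := by
      have e1 := Nat.choose_succ_succ (k+4) 3
      norm_num at e1
      rw [show k+1+4 = (k+4)+1 from rfl, show k+1+3 = k+4 from by omega]
      omega
    omega

lemma forward (m : ℕ) (x0 y z : Finset (Fin (2*m+1))) (hx0 : x0.card = m)
    (hy : y.card = m) (hz : z.card = m) :
    ∃ i j t p : ℤ, rho x0 y z = (i, j, t, p) ∧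
      0 ≤ i ∧ i ≤ m ∧ 0 ≤ j ∧ j ≤ m ∧
      max (i + j - m) (m - 1 - i - j) ≤ t ∧ t ≤ m - |i - j| ∧
      max (max 0 (i + j - m)) (max (i + t - m) (j + t - m)) ≤ p ∧
      p ≤ min (min i j) (min t (i + j + t + 1 - m)) := by
  classical
  refine ⟨_, _, _, _, rfl, ?_⟩
  have e1 : (x0 ∩ y) ∩ (x0 ∩ z) = x0 ∩ y ∩ z := by
    ext a; simp only [mem_inter]; tauto
  have e2 : (x0 ∩ y) ∩ (y ∩ z) = x0 ∩ y ∩ z := by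
    ext a; simp only [mem_inter]; tauto
  have e3 : (x0 ∩ z) ∩ (y ∩ z) = x0 ∩ y ∩ z := by
    ext a; simp only [mem_inter]; tauto
  have u3 : (x0 ∪ y) ∩ z = (x0 ∩ z) ∪ (y ∩ z) := by
    ext a; simp only [mem_inter, mem_union]; tauto
  have hiy : (x0 ∩ y).card ≤ m := le_trans (card_le_card inter_subset_left) hx0.le
  have hiz : (x0 ∩ z).card ≤ m := le_trans (card_le_card inter_subset_left) hx0.le
  have hpy : (x0 ∩ y ∩ z).card ≤ (x0 ∩ y).card := card_le_card (inter_subset_left)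
  have hpz : (x0 ∩ y ∩ z).card ≤ (x0 ∩ z).card := by
    apply card_le_card; rw [← e1]; exact inter_subset_right
  have hpt : (x0 ∩ y ∩ z).card ≤ (y ∩ z).card := by
    apply card_le_card; rw [← e2]; exact inter_subset_right
  have h1 : ((x0 ∩ y) ∪ (x0 ∩ z)).card + (x0 ∩ y ∩ z).card
      = (x0 ∩ y).card + (x0 ∩ z).card := by
    rw [← e1]; exact card_union_add_card_inter _ _
  have h1' : ((x0 ∩ y) ∪ (x0 ∩ z)).card ≤ m := by
    exact le_trans (card_le_card (union_subset inter_subset_left inter_subset_left)) hx0.le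
  have h2 : ((x0 ∩ y) ∪ (y ∩ z)).card + (x0 ∩ y ∩ z).card
      = (x0 ∩ y).card + (y ∩ z).card := by
    rw [← e2]; exact card_union_add_card_inter _ _
  have h2' : ((x0 ∩ y) ∪ (y ∩ z)).card ≤ m := by
    exact le_trans (card_le_card (union_subset inter_subset_right inter_subset_left)) hy.le
  have h3 : ((x0 ∩ z) ∪ (y ∩ z)).card + (x0 ∩ y ∩ z).card
      = (x0 ∩ z).card + (y ∩ z).card := by
    rw [← e3]; exact card_union_add_card_inter _ _
  have h3' : ((x0 ∩ z) ∪ (y ∩ z)).card ≤ m := by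
    exact le_trans (card_le_card (union_subset inter_subset_right inter_subset_right)) hz.le
  have u1 : (x0 ∪ y).card + (x0 ∩ y).card = x0.card + y.card :=
    card_union_add_card_inter _ _
  have u2 : ((x0 ∪ y) ∪ z).card + ((x0 ∩ z) ∪ (y ∩ z)).card
      = (x0 ∪ y).card + z.card := by
    rw [← u3]; exact card_union_add_card_inter _ _
  have u5 : ((x0 ∪ y) ∪ z).card ≤ 2*m+1 := by
    have := card_le_card (subset_univ ((x0 ∪ y) ∪ z))
    simpa using this
  refine ⟨by positivity, by exact_mod_cast hiy, by positivity, by exact_mod_cast hiz,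
    ?_, ?_, ?_, ?_⟩ <;>
  · try simp only [Int.abs_eq_natAbs]
    omega

lemma backward (m : ℕ) (x0 : Finset (Fin (2*m+1))) (hx0 : x0.card = m)
    (i j t p : ℤ)
    (c1 : 0 ≤ i) (c2 : i ≤ m) (c3 : 0 ≤ j) (c4 : j ≤ m)
    (c5 : max (i + j - m) (m - 1 - i - j) ≤ t) (c6 : t ≤ m - |i - j|)
    (c7 : max (max 0 (i + j - m)) (max (i + t - m) (j + t - m)) ≤ p)
    (c8 : p ≤ min (min i j) (min t (i + j + t + 1 - m))) :
    ∃ y z : Finset (Fin (2*m+1)), y.card = m ∧ z.card = m ∧ rho x0 y z = (i, j, t, p) := by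
  classical
  have hc7 := max_le_iff.mp c7
  have hc71 := max_le_iff.mp hc7.1
  have hc72 := max_le_iff.mp hc7.2
  have hc8 := le_min_iff.mp c8
  have hc81 := le_min_iff.mp hc8.1
  have hc82 := le_min_iff.mp hc8.2
  have hc5 := max_le_iff.mp c5
  have habs : |i - j| ≤ (m : ℤ) - t := by linarith
  have hij := abs_le.mp habs
  obtain ⟨h1, h2⟩ := hc71
  obtain ⟨h3, h4⟩ := hc72
  obtain ⟨h5, h6⟩ := hc81
  obtain ⟨h7, h8⟩ := hc82
  obtain ⟨h9, h10⟩ := hc5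
  obtain ⟨h11, h12⟩ := hij
  clear c5 c6 c7 c8 hc7 hc8 habs
  obtain ⟨P, hP⟩ : ∃ n : ℕ, (n : ℤ) = p := ⟨p.toNat, Int.toNat_of_nonneg (by omega)⟩
  obtain ⟨B, hB⟩ : ∃ n : ℕ, (n : ℤ) = i - p := ⟨(i-p).toNat, Int.toNat_of_nonneg (by omega)⟩
  obtain ⟨C, hC⟩ : ∃ n : ℕ, (n : ℤ) = j - p := ⟨(j-p).toNat, Int.toNat_of_nonneg (by omega)⟩
  obtain ⟨E, hE⟩ : ∃ n : ℕ, (n : ℤ) = t - p := ⟨(t-p).toNat, Int.toNat_of_nonneg (by omega)⟩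
  obtain ⟨F, hF⟩ : ∃ n : ℕ, (n : ℤ) = m - i - t + p :=
    ⟨(m - i - t + p).toNat, Int.toNat_of_nonneg (by omega)⟩
  obtain ⟨G, hG⟩ : ∃ n : ℕ, (n : ℤ) = m - j - t + p :=
    ⟨(m - j - t + p).toNat, Int.toNat_of_nonneg (by omega)⟩
  -- compl card
  have hcompl : x0ᶜ.card = m + 1 := by
    rw [Finset.card_compl, hx0]; simp [Fintype.card_fin]; omega
  -- choose subsets of x0
  obtain ⟨U, hUsub, hUcard⟩ := Finset.exists_subset_card_eq
    (show P + B + C ≤ x0.card by rw [hx0]; omega)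
  obtain ⟨A, hAsub, hAcard⟩ := Finset.exists_subset_card_eq
    (show P ≤ U.card by rw [hUcard]; omega)
  obtain ⟨B', hBsub, hBcard⟩ := Finset.exists_subset_card_eq
    (show B ≤ (U \ A).card by rw [card_sdiff_of_subset hAsub, hUcard, hAcard]; omega)
  set C' := (U \ A) \ B' with hC'def
  have hCcard : C'.card = C := by
    rw [hC'def, card_sdiff_of_subset hBsub, card_sdiff_of_subset hAsub, hUcard, hAcard, hBcard]; omega
  -- choose subsets of x0ᶜ
  obtain ⟨V, hVsub, hVcard⟩ := Finset.exists_subset_card_eq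
    (show E + F + G ≤ x0ᶜ.card by rw [hcompl]; omega)
  obtain ⟨E', hEsub, hEcard⟩ := Finset.exists_subset_card_eq
    (show E ≤ V.card by rw [hVcard]; omega)
  obtain ⟨F', hFsub, hFcard⟩ := Finset.exists_subset_card_eq
    (show F ≤ (V \ E').card by rw [card_sdiff_of_subset hEsub, hVcard, hEcard]; omega)
  set G' := (V \ E') \ F' with hG'def
  have hGcard : G'.card = G := by
    rw [hG'def, card_sdiff_of_subset hFsub, card_sdiff_of_subset hEsub, hVcard, hEcard, hFcard]; omega
  -- pointwise membership facts
  have mA : ∀ a, a ∈ A → a ∈ x0 := fun a ha => hUsub (hAsub ha)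
  have mB : ∀ a, a ∈ B' → a ∈ x0 := fun a ha => hUsub (mem_sdiff.mp (hBsub ha)).1
  have mC : ∀ a, a ∈ C' → a ∈ x0 := fun a ha =>
    hUsub (mem_sdiff.mp (mem_sdiff.mp ha).1).1
  have mE : ∀ a, a ∈ E' → a ∉ x0 := fun a ha => (mem_compl.mp (hVsub (hEsub ha)))
  have mF : ∀ a, a ∈ F' → a ∉ x0 := fun a ha =>
    (mem_compl.mp (hVsub (mem_sdiff.mp (hFsub ha)).1))
  have mG : ∀ a, a ∈ G' → a ∉ x0 := fun a ha =>
    (mem_compl.mp (hVsub (mem_sdiff.mp (mem_sdiff.mp ha).1).1))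
  have dAB : ∀ a, a ∈ A → a ∉ B' := by
    intro a ha hb; exact (mem_sdiff.mp (hBsub hb)).2 ha
  have dAC : ∀ a, a ∈ A → a ∉ C' := by
    intro a ha hc; exact (mem_sdiff.mp (mem_sdiff.mp hc).1).2 ha
  have dBC : ∀ a, a ∈ B' → a ∉ C' := by
    intro a hb hc; exact (mem_sdiff.mp hc).2 hb
  have dEF : ∀ a, a ∈ E' → a ∉ F' := by
    intro a ha hb; exact (mem_sdiff.mp (hFsub hb)).2 ha
  have dEG : ∀ a, a ∈ E' → a ∉ G' := by
    intro a ha hc; exact (mem_sdiff.mp (mem_sdiff.mp hc).1).2 ha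
  have dFG : ∀ a, a ∈ F' → a ∉ G' := by
    intro a hb hc; exact (mem_sdiff.mp hc).2 hb
  -- the sets
  refine ⟨A ∪ B' ∪ E' ∪ F', A ∪ C' ∪ E' ∪ G', ?_, ?_, ?_⟩
  · -- card y = m
    have d1 : Disjoint (A ∪ B' ∪ E') F' := by
      rw [disjoint_left]; intro a ha hf
      simp only [mem_union] at ha
      rcases ha with (h | h) | h
      · exact mF a hf (mA a h)
      · exact mF a hf (mB a h)
      · exact dEF a h hf
    have d2 : Disjoint (A ∪ B') E' := by
      rw [disjoint_left]; intro a ha he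
      simp only [mem_union] at ha
      rcases ha with h | h
      · exact mE a he (mA a h)
      · exact mE a he (mB a h)
    have d3 : Disjoint A B' := by
      rw [disjoint_left]; exact dAB
    rw [card_union_of_disjoint d1, card_union_of_disjoint d2, card_union_of_disjoint d3,
      hAcard, hBcard, hEcard, hFcard]
    omega
  · -- card z = m
    have d1 : Disjoint (A ∪ C' ∪ E') G' := by
      rw [disjoint_left]; intro a ha hf
      simp only [mem_union] at ha
      rcases ha with (h | h) | h
      · exact mG a hf (mA a h)
      · exact mG a hf (mC a h)
      · exact dEG a h hf
    have d2 : Disjoint (A ∪ C') E' := by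
      rw [disjoint_left]; intro a ha he
      simp only [mem_union] at ha
      rcases ha with h | h
      · exact mE a he (mA a h)
      · exact mE a he (mC a h)
    have d3 : Disjoint A C' := by
      rw [disjoint_left]; exact dAC
    rw [card_union_of_disjoint d1, card_union_of_disjoint d2, card_union_of_disjoint d3,
      hAcard, hCcard, hEcard, hGcard]
    omega
  · -- rho value
    have hxy : x0 ∩ (A ∪ B' ∪ E' ∪ F') = A ∪ B' := by
      ext a
      simp only [mem_inter, mem_union]
      constructor
      · rintro ⟨hx, ((h | h) | h) | h⟩
        · exact Or.inl h
        · exact Or.inr h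
        · exact absurd hx (mE a h)
        · exact absurd hx (mF a h)
      · rintro (h | h)
        · exact ⟨mA a h, Or.inl (Or.inl (Or.inl h))⟩
        · exact ⟨mB a h, Or.inl (Or.inl (Or.inr h))⟩
    have hxz : x0 ∩ (A ∪ C' ∪ E' ∪ G') = A ∪ C' := by
      ext a
      simp only [mem_inter, mem_union]
      constructor
      · rintro ⟨hx, ((h | h) | h) | h⟩
        · exact Or.inl h
        · exact Or.inr h
        · exact absurd hx (mE a h)
        · exact absurd hx (mG a h)
      · rintro (h | h)
        · exact ⟨mA a h, Or.inl (Or.inl (Or.inl h))⟩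
        · exact ⟨mC a h, Or.inl (Or.inl (Or.inr h))⟩
    have hyz : (A ∪ B' ∪ E' ∪ F') ∩ (A ∪ C' ∪ E' ∪ G') = A ∪ E' := by
      ext a
      simp only [mem_inter, mem_union]
      constructor
      · rintro ⟨((h1 | h1) | h1) | h1, ((h2 | h2) | h2) | h2⟩
        · exact Or.inl h1
        · exact Or.inl h1
        · exact Or.inl h1
        · exact Or.inl h1
        · exact Or.inl h2
        · exact (dBC a h1 h2).elim
        · exact (mE a h2 (mB a h1)).elim
        · exact (mG a h2 (mB a h1)).elim
        · exact Or.inr h1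
        · exact Or.inr h1
        · exact Or.inr h1
        · exact Or.inr h1
        · exact Or.inl h2
        · exact (mF a h1 (mC a h2)).elim
        · exact Or.inr h2
        · exact (dFG a h1 h2).elim
      · rintro (h | h)
        · exact ⟨Or.inl (Or.inl (Or.inl h)), Or.inl (Or.inl (Or.inl h))⟩
        · exact ⟨Or.inl (Or.inr h), Or.inl (Or.inr h)⟩
    have hxyz : x0 ∩ (A ∪ B' ∪ E' ∪ F') ∩ (A ∪ C' ∪ E' ∪ G') = A := by
      rw [hxy]
      ext a
      simp only [mem_inter, mem_union]
      constructor
      · rintro ⟨h1 | h1, ((h2 | h2) | h2) | h2⟩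
        · exact h1
        · exact h1
        · exact h1
        · exact h1
        · exact h2
        · exact (dBC a h1 h2).elim
        · exact (mE a h2 (mB a h1)).elim
        · exact (mG a h2 (mB a h1)).elim
      · intro h
        exact ⟨Or.inl h, Or.inl (Or.inl (Or.inl h))⟩
    have dAB' : Disjoint A B' := by rw [disjoint_left]; exact dAB
    have dAC' : Disjoint A C' := by rw [disjoint_left]; exact dAC
    have dAE' : Disjoint A E' := by
      rw [disjoint_left]; intro a ha he; exact mE a he (mA a ha)
    rw [rho, hxyz, hxy, hxz, hyz, card_union_of_disjoint dAB',
      card_union_of_disjoint dAC', card_union_of_disjoint dAE',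
      hAcard, hBcard, hCcard, hEcard]
    have g1 : (P : ℤ) + B = i := by omega
    have g2 : (P : ℤ) + C = j := by omega
    have g3 : (P : ℤ) + E = t := by omega
    simp only [Prod.mk.injEq]
    refine ⟨by push_cast; omega, by push_cast; omega, by push_cast; omega, by omega⟩


def psi : N4 → ℤ × ℤ × ℤ × ℤ := fun x =>
  ((x.1 : ℤ) + x.2.1, (x.1 : ℤ) + x.2.2.1, (x.1 : ℤ) + x.2.2.2, (x.1 : ℤ))

lemma psi_inj : Function.Injective psi := by
  rintro ⟨a1, a2, a3, a4⟩ ⟨b1, b2, b3, b4⟩ h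
  simp only [psi, Prod.mk.injEq] at h ⊢
  omega

lemma rhs_eq_coe (m : ℕ) :
    {q : ℤ × ℤ × ℤ × ℤ | ∃ i j t p : ℤ, q = (i, j, t, p) ∧
        0 ≤ i ∧ i ≤ m ∧ 0 ≤ j ∧ j ≤ m ∧
        max (i + j - m) (m - 1 - i - j) ≤ t ∧ t ≤ m - |i - j| ∧
        max (max 0 (i + j - m)) (max (i + t - m) (j + t - m)) ≤ p ∧
        p ≤ min (min i j) (min t (i + j + t + 1 - m))}
      = ↑((R4 m).image psi) := by
  ext q
  simp only [Set.mem_setOf_eq, Finset.coe_image, Set.mem_image, Finset.mem_coe]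
  constructor
  · rintro ⟨i, j, t, p, rfl, c1, c2, c3, c4, c5, c6, c7, c8⟩
    have hc7 := max_le_iff.mp c7
    have hc71 := max_le_iff.mp hc7.1
    have hc72 := max_le_iff.mp hc7.2
    have hc8 := le_min_iff.mp c8
    have hc81 := le_min_iff.mp hc8.1
    have hc82 := le_min_iff.mp hc8.2
    have hc5 := max_le_iff.mp c5
    have habs : |i - j| ≤ (m : ℤ) - t := by linarith
    have hij := abs_le.mp habs
    obtain ⟨h1, h2⟩ := hc71
    obtain ⟨h3, h4⟩ := hc72
    obtain ⟨h5, h6⟩ := hc81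
    obtain ⟨h7, h8⟩ := hc82
    obtain ⟨h9, h10⟩ := hc5
    obtain ⟨h11, h12⟩ := hij
    clear c5 c6 c7 c8 hc7 hc8 habs
    obtain ⟨P, hP⟩ : ∃ n : ℕ, (n : ℤ) = p := ⟨p.toNat, Int.toNat_of_nonneg (by omega)⟩
    obtain ⟨B, hB⟩ : ∃ n : ℕ, (n : ℤ) = i - p := ⟨(i-p).toNat, Int.toNat_of_nonneg (by omega)⟩
    obtain ⟨C, hC⟩ : ∃ n : ℕ, (n : ℤ) = j - p := ⟨(j-p).toNat, Int.toNat_of_nonneg (by omega)⟩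
    obtain ⟨E, hE⟩ : ∃ n : ℕ, (n : ℤ) = t - p := ⟨(t-p).toNat, Int.toNat_of_nonneg (by omega)⟩
    refine ⟨(P, B, C, E), ?_, ?_⟩
    · simp only [mem_R4]
      refine ⟨by omega, by omega, by omega, by omega⟩
    · simp only [psi, Prod.mk.injEq]
      refine ⟨by omega, by omega, by omega, by omega⟩
  · rintro ⟨x, hx, rfl⟩
    rw [mem_R4] at hx
    refine ⟨(x.1 : ℤ) + x.2.1, (x.1 : ℤ) + x.2.2.1, (x.1 : ℤ) + x.2.2.2, (x.1 : ℤ),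
      rfl, by omega, by omega, by omega, by omega, by omega, ?_, by omega, by omega⟩
    have : |((x.1 : ℤ) + x.2.1) - ((x.1 : ℤ) + x.2.2.1)| =
        (((x.1 : ℤ) + x.2.1) - ((x.1 : ℤ) + x.2.2.1)).natAbs := Int.abs_eq_natAbs _
    rw [this]
    omega

theorem stmt_1 (m : ℕ) (hm : 1 ≤ m) (x0 : Finset (Fin (2*m+1))) (hx0 : x0.card = m) :
    {q : ℤ × ℤ × ℤ × ℤ | ∃ y z : Finset (Fin (2*m+1)),
        y.card = m ∧ z.card = m ∧ rho x0 y z = q}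
      = {q : ℤ × ℤ × ℤ × ℤ | ∃ i j t p : ℤ, q = (i, j, t, p) ∧
          0 ≤ i ∧ i ≤ m ∧ 0 ≤ j ∧ j ≤ m ∧
          max (i + j - m) (m - 1 - i - j) ≤ t ∧ t ≤ m - |i - j| ∧
          max (max 0 (i + j - m)) (max (i + t - m) (j + t - m)) ≤ p ∧
          p ≤ min (min i j) (min t (i + j + t + 1 - m))} ∧
    {q : ℤ × ℤ × ℤ × ℤ | ∃ y z : Finset (Fin (2*m+1)),
        y.card = m ∧ z.card = m ∧ rho x0 y z = q}.ncard = (m+4).choose 4 := by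
  have hset : {q : ℤ × ℤ × ℤ × ℤ | ∃ y z : Finset (Fin (2*m+1)),
        y.card = m ∧ z.card = m ∧ rho x0 y z = q}
      = {q : ℤ × ℤ × ℤ × ℤ | ∃ i j t p : ℤ, q = (i, j, t, p) ∧
          0 ≤ i ∧ i ≤ m ∧ 0 ≤ j ∧ j ≤ m ∧
          max (i + j - m) (m - 1 - i - j) ≤ t ∧ t ≤ m - |i - j| ∧
          max (max 0 (i + j - m)) (max (i + t - m) (j + t - m)) ≤ p ∧
          p ≤ min (min i j) (min t (i + j + t + 1 - m))} := by
    ext q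
    simp only [Set.mem_setOf_eq]
    constructor
    · rintro ⟨y, z, hy, hz, rfl⟩
      obtain ⟨i, j, t, p, heq, rest⟩ := forward m x0 y z hx0 hy hz
      exact ⟨i, j, t, p, heq, rest⟩
    · rintro ⟨i, j, t, p, rfl, c1, c2, c3, c4, c5, c6, c7, c8⟩
      obtain ⟨y, z, hy, hz, hr⟩ := backward m x0 hx0 i j t p c1 c2 c3 c4 c5 c6 c7 c8
      exact ⟨y, z, hy, hz, hr⟩
  refine ⟨hset, ?_⟩
  rw [hset, rhs_eq_coe, Set.ncard_coe_finset,
    Finset.card_image_of_injective _ psi_inj, card_R4]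
end

section
/- For every m ≥ 1, the set I_{(m,m+1)} := { ρ(y,z) : y, z ⊆ S with |y| = m and |z| = m+1 } equals the set of integer quadruples (i,j,t,p) satisfying 0 ≤ i,j ≤ m, |i+j−m| ≤ t ≤ m − max(i−j, j−i−1), and i − min(i, m−j, m−t, i−j−t+m+1) ≤ p ≤ i − max(0, i−j, i−t, m−j−t). Moreover, the cardinality of I_{(m,m+1)} is the binomial coefficient C(m+4, 4). -/
open Finset

lemma exists_inter_card {α : Type*} [DecidableEq α] (U : Finset α) (a b c : ℕ)
    (hca : c ≤ a) (hcb : c ≤ b) (h : a + b ≤ U.card + c) :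
    ∃ A B : Finset α, A ⊆ U ∧ B ⊆ U ∧ A.card = a ∧ B.card = b ∧ (A ∩ B).card = c := by
  obtain ⟨A, hAU, hA⟩ := Finset.exists_subset_card_eq (show a ≤ U.card by omega)
  obtain ⟨G, hGA, hG⟩ := Finset.exists_subset_card_eq (show c ≤ A.card by omega)
  have hsd : (U \ A).card = U.card - a := by rw [Finset.card_sdiff_of_subset hAU, hA]
  obtain ⟨B', hB'U, hB'⟩ := Finset.exists_subset_card_eq
    (show b - c ≤ (U \ A).card by omega)
  have hdisj : Disjoint B' A := Finset.disjoint_of_subset_left hB'U Finset.sdiff_disjoint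
  have hGB' : Disjoint G B' := Finset.disjoint_of_subset_left hGA hdisj.symm
  refine ⟨A, G ∪ B', hAU, Finset.union_subset (hGA.trans hAU) (hB'U.trans (Finset.sdiff_subset)), hA, ?_, ?_⟩
  · rw [Finset.card_union_of_disjoint hGB', hG, hB']; omega
  · have : A ∩ (G ∪ B') = G := by
      ext x
      simp only [Finset.mem_inter, Finset.mem_union]
      constructor
      · rintro ⟨hxA, hxG | hxB'⟩
        · exact hxG
        · exact absurd hxA (Finset.disjoint_left.mp hdisj hxB')
      · exact fun hx => ⟨hGA hx, Or.inl hx⟩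
    rw [this, hG]


lemma pair_iff (m : ℕ) (x0 : Finset (Fin (2*m+1))) (hx0 : x0.card = m) (i j t p : ℤ) :
    (∃ y z : Finset (Fin (2*m+1)), y.card = m ∧ z.card = m+1 ∧ rho x0 y z = (i,j,t,p)) ↔
    (0 ≤ p ∧ p ≤ i ∧ p ≤ j ∧ p ≤ t ∧ i + j ≤ m + p ∧ i + t ≤ m + p ∧
      j + t ≤ m + 1 + p ∧ m + p ≤ i + j + t) := by
  constructor
  · rintro ⟨y, z, hy, hz, hrho⟩
    rw [rho, Prod.mk.injEq, Prod.mk.injEq, Prod.mk.injEq] at hrho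
    obtain ⟨hi, hj, ht, hp⟩ := hrho
    have e1 : x0 ∩ y ∩ z ⊆ x0 ∩ y := Finset.inter_subset_left
    have e2 : x0 ∩ y ∩ z ⊆ x0 ∩ z := by intro a; simp only [Finset.mem_inter]; tauto
    have e3 : x0 ∩ y ∩ z ⊆ y ∩ z := by intro a; simp only [Finset.mem_inter]; tauto
    have k1 := Finset.card_le_card e1
    have k2 := Finset.card_le_card e2
    have k3 := Finset.card_le_card e3
    -- pair unions
    have u1 : ((x0 ∩ y) ∪ (x0 ∩ z)).card + (x0 ∩ y ∩ z).card
        = (x0 ∩ y).card + (x0 ∩ z).card := by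
      have : (x0 ∩ y) ∩ (x0 ∩ z) = x0 ∩ y ∩ z := by
        ext a; simp only [Finset.mem_inter]; tauto
      rw [← this]; exact Finset.card_union_add_card_inter _ _
    have u1' : ((x0 ∩ y) ∪ (x0 ∩ z)).card ≤ m := by
      exact le_trans (Finset.card_le_card (Finset.union_subset Finset.inter_subset_left
        Finset.inter_subset_left)) (le_of_eq hx0)
    have u2 : ((x0 ∩ y) ∪ (y ∩ z)).card + (x0 ∩ y ∩ z).card
        = (x0 ∩ y).card + (y ∩ z).card := by
      have : (x0 ∩ y) ∩ (y ∩ z) = x0 ∩ y ∩ z := by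
        ext a; simp only [Finset.mem_inter]; tauto
      rw [← this]; exact Finset.card_union_add_card_inter _ _
    have u2' : ((x0 ∩ y) ∪ (y ∩ z)).card ≤ m := by
      exact le_trans (Finset.card_le_card (Finset.union_subset Finset.inter_subset_right
        Finset.inter_subset_left)) (le_of_eq hy)
    have u3 : ((x0 ∩ z) ∪ (y ∩ z)).card + (x0 ∩ y ∩ z).card
        = (x0 ∩ z).card + (y ∩ z).card := by
      have : (x0 ∩ z) ∩ (y ∩ z) = x0 ∩ y ∩ z := by
        ext a; simp only [Finset.mem_inter]; tauto
      rw [← this]; exact Finset.card_union_add_card_inter _ _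
    have u3' : ((x0 ∩ z) ∪ (y ∩ z)).card ≤ m + 1 := by
      exact le_trans (Finset.card_le_card (Finset.union_subset Finset.inter_subset_right
        Finset.inter_subset_right)) (le_of_eq hz)
    -- three-set inclusion-exclusion
    have ie1 : (x0 ∪ (y ∪ z)).card + (x0 ∩ (y ∪ z)).card = x0.card + (y ∪ z).card :=
      Finset.card_union_add_card_inter _ _
    have ie2 : (y ∪ z).card + (y ∩ z).card = y.card + z.card :=
      Finset.card_union_add_card_inter _ _
    have ie3 : x0 ∩ (y ∪ z) = (x0 ∩ y) ∪ (x0 ∩ z) := Finset.inter_union_distrib_left _ _ _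
    have ie4 : (x0 ∪ (y ∪ z)).card ≤ 2*m+1 := by
      have := Finset.card_le_univ (x0 ∪ (y ∪ z))
      simpa using this
    rw [ie3] at ie1
    subst hi hj ht hp
    omega
  · rintro ⟨c1, c2, c3, c4, c5, c6, c7, c8⟩
    have him : i ≤ m := by omega
    have hjm : j ≤ m := by omega
    -- natural number versions
    obtain ⟨iN, rfl⟩ : ∃ n : ℕ, (n : ℤ) = i := ⟨i.toNat, by omega⟩
    obtain ⟨jN, rfl⟩ : ∃ n : ℕ, (n : ℤ) = j := ⟨j.toNat, by omega⟩
    obtain ⟨tN, rfl⟩ : ∃ n : ℕ, (n : ℤ) = t := ⟨t.toNat, by omega⟩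
    obtain ⟨pN, rfl⟩ : ∃ n : ℕ, (n : ℤ) = p := ⟨p.toNat, by omega⟩
    have hcompl : (x0ᶜ).card = m + 1 := by
      rw [Finset.card_compl, hx0]; simp; omega
    obtain ⟨Y1, Z1, hY1, hZ1, hY1c, hZ1c, hYZ1⟩ :=
      exists_inter_card x0 iN jN pN (by omega) (by omega) (by omega)
    obtain ⟨Y2, Z2, hY2, hZ2, hY2c, hZ2c, hYZ2⟩ :=
      exists_inter_card x0ᶜ (m - iN) (m + 1 - jN) (tN - pN) (by omega) (by omega)
        (by rw [hcompl]; omega)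
    have hd : ∀ a, a ∈ x0 → a ∉ x0ᶜ := by intro a ha; simp [ha]
    have hY12 : Disjoint Y1 Y2 := by
      rw [Finset.disjoint_left]; intro a h1 h2; exact hd a (hY1 h1) (hY2 h2)
    have hZ12 : Disjoint Z1 Z2 := by
      rw [Finset.disjoint_left]; intro a h1 h2; exact hd a (hZ1 h1) (hZ2 h2)
    refine ⟨Y1 ∪ Y2, Z1 ∪ Z2, ?_, ?_, ?_⟩
    · rw [Finset.card_union_of_disjoint hY12, hY1c, hY2c]; omega
    · rw [Finset.card_union_of_disjoint hZ12, hZ1c, hZ2c]; omega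
    · have m1 : x0 ∩ (Y1 ∪ Y2) = Y1 := by
        ext a; simp only [Finset.mem_inter, Finset.mem_union]
        constructor
        · rintro ⟨ha, h1 | h2⟩
          · exact h1
          · exact absurd (hY2 h2) (by simp [ha])
        · exact fun h => ⟨hY1 h, Or.inl h⟩
      have m2 : x0 ∩ (Z1 ∪ Z2) = Z1 := by
        ext a; simp only [Finset.mem_inter, Finset.mem_union]
        constructor
        · rintro ⟨ha, h1 | h2⟩
          · exact h1
          · exact absurd (hZ2 h2) (by simp [ha])
        · exact fun h => ⟨hZ1 h, Or.inl h⟩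
      have m3 : (Y1 ∪ Y2) ∩ (Z1 ∪ Z2) = (Y1 ∩ Z1) ∪ (Y2 ∩ Z2) := by
        ext a; simp only [Finset.mem_inter, Finset.mem_union]
        constructor
        · rintro ⟨h1 | h1, h2 | h2⟩
          · exact Or.inl ⟨h1, h2⟩
          · exact absurd (hY1 h1) (by simpa using hZ2 h2)
          · exact absurd (hZ1 h2) (by simpa using hY2 h1)
          · exact Or.inr ⟨h1, h2⟩
        · rintro (⟨h1, h2⟩ | ⟨h1, h2⟩)
          · exact ⟨Or.inl h1, Or.inl h2⟩
          · exact ⟨Or.inr h1, Or.inr h2⟩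
      have m4 : x0 ∩ (Y1 ∪ Y2) ∩ (Z1 ∪ Z2) = Y1 ∩ Z1 := by
        rw [m1]
        ext a; simp only [Finset.mem_inter, Finset.mem_union]
        constructor
        · rintro ⟨h1, h2 | h2⟩
          · exact ⟨h1, h2⟩
          · exact absurd (hY1 h1) (by simpa using hZ2 h2)
        · exact fun ⟨h1, h2⟩ => ⟨h1, Or.inl h2⟩
      have hdd : Disjoint (Y1 ∩ Z1) (Y2 ∩ Z2) :=
        Finset.disjoint_of_subset_left Finset.inter_subset_left
          (Finset.disjoint_of_subset_right Finset.inter_subset_left hY12)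
      rw [rho, m4, m1, m2, m3, Finset.card_union_of_disjoint hdd, hY1c, hZ1c, hYZ1, hYZ2]
      simp only [Prod.ext_iff]
      exact ⟨trivial, trivial, by omega, trivial⟩


def cellCond (m : ℕ) (q : ℤ × ℤ × ℤ × ℤ) : Prop :=
  0 ≤ q.2.2.2 ∧ q.2.2.2 ≤ q.1 ∧ q.2.2.2 ≤ q.2.1 ∧ q.2.2.2 ≤ q.2.2.1 ∧
  q.1 + q.2.1 ≤ m + q.2.2.2 ∧ q.1 + q.2.2.1 ≤ m + q.2.2.2 ∧
  q.2.1 + q.2.2.1 ≤ m + 1 + q.2.2.2 ∧ (m:ℤ) + q.2.2.2 ≤ q.1 + q.2.1 + q.2.2.1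

instance (m : ℕ) (q : ℤ × ℤ × ℤ × ℤ) : Decidable (cellCond m q) := by
  unfold cellCond; infer_instance

noncomputable def Fm (m : ℕ) : Finset (ℤ × ℤ × ℤ × ℤ) :=
  (Finset.Icc (0:ℤ) m ×ˢ Finset.Icc (0:ℤ) m ×ˢ Finset.Icc (0:ℤ) (m+1) ×ˢ
    Finset.Icc (0:ℤ) m).filter (cellCond m)

lemma mem_Fm (m : ℕ) (q : ℤ × ℤ × ℤ × ℤ) : q ∈ Fm m ↔ cellCond m q := by
  obtain ⟨i, j, t, p⟩ := q
  simp only [Fm, Finset.mem_filter, Finset.mem_product, Finset.mem_Icc, cellCond]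
  omega

def fwd (m : ℕ) (q : ℤ × ℤ × ℤ × ℤ) : ℕ × ℕ × ℕ × ℕ × ℕ :=
  if q.1 + q.2.1 + q.2.2.1 - 2 * q.2.2.2 - m ≤ 0 then
    ((q.1 + q.2.1 + q.2.2.1 - q.2.2.2 - m).toNat, (q.1 - q.2.2.2).toNat,
      (q.2.1 - q.2.2.2).toNat,
      (m - q.1 - q.2.1 + (q.1 + q.2.1 + q.2.2.1 - q.2.2.2 - m)).toNat,
      (2 * (2 * q.2.2.2 + m - q.1 - q.2.1 - q.2.2.1)).toNat)
  else
    (q.2.2.2.toNat, (q.1 - (q.1 + q.2.1 + q.2.2.1 - q.2.2.2 - m) + 1).toNat,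
      (q.2.1 - (q.1 + q.2.1 + q.2.2.1 - q.2.2.2 - m)).toNat,
      (m - q.1 - q.2.1 + q.2.2.2).toNat,
      (2 * (q.1 + q.2.1 + q.2.2.1 - 2 * q.2.2.2 - m) - 1).toNat)

def bwd (m : ℕ) (e : ℕ × ℕ × ℕ × ℕ × ℕ) : ℤ × ℤ × ℤ × ℤ :=
  if e.2.2.2.2 % 2 = 0 then
    ((e.1 + e.2.2.2.2 / 2 + e.2.1 : ℕ), (e.1 + e.2.2.2.2 / 2 + e.2.2.1 : ℕ),
      (e.1 + e.2.2.2.2 / 2 + e.2.2.2.1 : ℕ), (e.1 + e.2.2.2.2 / 2 : ℕ))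
  else
    ((e.1 + e.2.1 + (e.2.2.2.2 + 1) / 2 - 1 : ℕ), (e.1 + e.2.2.1 + (e.2.2.2.2 + 1) / 2 : ℕ),
      (e.1 + e.2.2.2.1 + (e.2.2.2.2 + 1) / 2 : ℕ), (e.1 : ℕ))

def Q5 (m : ℕ) : Finset (ℕ × ℕ × ℕ × ℕ × ℕ) :=
  (Finset.range (m+1) ×ˢ Finset.range (m+1) ×ˢ Finset.range (m+1) ×ˢ Finset.range (m+1) ×ˢ
    Finset.range (m+1)).filter fun e => e.1 + e.2.1 + e.2.2.1 + e.2.2.2.1 + e.2.2.2.2 = m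

lemma mem_Q5 (m : ℕ) (e : ℕ × ℕ × ℕ × ℕ × ℕ) :
    e ∈ Q5 m ↔ e.1 + e.2.1 + e.2.2.1 + e.2.2.2.1 + e.2.2.2.2 = m := by
  obtain ⟨a, b, c, d, f⟩ := e
  simp only [Q5, Finset.mem_filter, Finset.mem_product, Finset.mem_range]
  omega

lemma card_Fm_Q5 (m : ℕ) : (Fm m).card = (Q5 m).card := by
  refine Finset.card_nbij' (fwd m) (bwd m) ?_ ?_ ?_ ?_
  · intro q hq
    rw [Finset.mem_coe, mem_Fm] at hq
    obtain ⟨i, j, t, p⟩ := q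
    obtain ⟨c1, c2, c3, c4, c5, c6, c7, c8⟩ := hq
    rw [Finset.mem_coe, mem_Q5]
    unfold fwd
    dsimp only at *
    split_ifs with h <;> (try dsimp only at *) <;> omega
  · intro e he
    rw [Finset.mem_coe, mem_Q5] at he
    obtain ⟨a, b, c, d, f⟩ := e
    rw [Finset.mem_coe, mem_Fm]
    unfold bwd cellCond
    dsimp only at *
    split_ifs with h <;> (try dsimp only at *) <;> (try push_cast) <;> omega
  · intro q hq
    rw [Finset.mem_coe, mem_Fm] at hq
    obtain ⟨i, j, t, p⟩ := q
    obtain ⟨c1, c2, c3, c4, c5, c6, c7, c8⟩ := hq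
    unfold fwd bwd
    dsimp only at *
    split_ifs with h h2 h3 <;> (try dsimp only at *) <;>
      (try simp only [Prod.mk.injEq]) <;> omega
  · intro e he
    rw [Finset.mem_coe, mem_Q5] at he
    obtain ⟨a, b, c, d, f⟩ := e
    unfold bwd fwd
    dsimp only at *
    split_ifs with h h2 h3 <;> (try dsimp only at *) <;>
      (try simp only [Prod.mk.injEq]) <;> omega


lemma card_Q5 (m : ℕ) : (Q5 m).card = (m+4).choose 4 := by
  have key : (Q5 m).card = (Finset.piAntidiag (univ : Finset (Fin 5)) m).card := by
    refine Finset.card_nbij' (fun e => ![e.1, e.2.1, e.2.2.1, e.2.2.2.1, e.2.2.2.2])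
      (fun f => (f 0, f 1, f 2, f 3, f 4)) ?_ ?_ ?_ ?_
    · intro e he
      rw [Finset.mem_coe, mem_Q5] at he
      rw [Finset.mem_coe, Finset.mem_piAntidiag]
      refine ⟨?_, by simp⟩
      rw [Fin.sum_univ_five]
      simpa using he
    · intro f hf
      rw [Finset.mem_coe, Finset.mem_piAntidiag] at hf
      rw [Finset.mem_coe, mem_Q5]
      rw [Fin.sum_univ_five] at hf
      exact hf.1
    · intro e he; rfl
    · intro f hf
      funext x
      fin_cases x <;> rfl
  rw [key, ← Finset.map_sym_eq_piAntidiag, Finset.card_map, Finset.sym_univ, Finset.card_univ,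
    Sym.card_sym_eq_choose]
  simp only [Fintype.card_fin]
  rw [show 5 + m - 1 = m + 4 by omega, ← Nat.choose_symm (by omega : 4 ≤ m + 4),
    show m + 4 - 4 = m by omega]


theorem stmt_2 (m : ℕ) (hm : 1 ≤ m) (x0 : Finset (Fin (2*m+1))) (hx0 : x0.card = m) :
    {q : ℤ × ℤ × ℤ × ℤ | ∃ y z : Finset (Fin (2*m+1)),
        y.card = m ∧ z.card = m+1 ∧ rho x0 y z = q}
      = {q : ℤ × ℤ × ℤ × ℤ | ∃ i j t p : ℤ, q = (i, j, t, p) ∧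
          0 ≤ i ∧ i ≤ m ∧ 0 ≤ j ∧ j ≤ m ∧
          |i + j - m| ≤ t ∧ t ≤ m - max (i - j) (j - i - 1) ∧
          i - min (min i (m - j)) (min (m - t) (i - j - t + m + 1)) ≤ p ∧
          p ≤ i - max (max 0 (i - j)) (max (i - t) (m - j - t))} ∧
    {q : ℤ × ℤ × ℤ × ℤ | ∃ y z : Finset (Fin (2*m+1)),
        y.card = m ∧ z.card = m+1 ∧ rho x0 y z = q}.ncard = (m+4).choose 4 := by
  have hsetF : {q : ℤ × ℤ × ℤ × ℤ | ∃ y z : Finset (Fin (2*m+1)),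
      y.card = m ∧ z.card = m+1 ∧ rho x0 y z = q} = ↑(Fm m) := by
    ext q
    obtain ⟨i, j, t, p⟩ := q
    rw [Set.mem_setOf_eq, Finset.mem_coe, mem_Fm, pair_iff m x0 hx0]
    unfold cellCond
    dsimp only
    omega
  constructor
  · ext q
    obtain ⟨i0, j0, t0, p0⟩ := q
    rw [Set.ext_iff] at hsetF
    rw [hsetF (i0, j0, t0, p0), Finset.mem_coe, mem_Fm]
    unfold cellCond
    dsimp only
    rw [Set.mem_setOf_eq]
    constructor
    · rintro ⟨c1, c2, c3, c4, c5, c6, c7, c8⟩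
      refine ⟨i0, j0, t0, p0, rfl, by omega, by omega, by omega, by omega, ?_, ?_, ?_, ?_⟩
      · rw [abs_le]; omega
      · omega
      · omega
      · omega
    · rintro ⟨i, j, t, p, heq, h1, h2, h3, h4, h5, h6, h7, h8⟩
      rw [Prod.mk.injEq, Prod.mk.injEq, Prod.mk.injEq] at heq
      obtain ⟨rfl, rfl, rfl, rfl⟩ := heq
      rw [abs_le] at h5
      omega
  · rw [hsetF, Set.ncard_coe_finset, card_Fm_Q5, card_Q5]
end

section
/- For every m ≥ 1, the set I_{(m+1,m)} := { ρ(y,z) : y, z ⊆ S with |y| = m+1 and |z| = m } equals the set of integer quadruples (i,j,t,p) satisfying 0 ≤ i,j ≤ m, |i+j−m| ≤ t ≤ m − max(i−j−1, j−i), and j − min(m−i, j, m−t, j−i−t+m+1) ≤ p ≤ j − max(0, j−i, j−t, m−i−t). Moreover, the cardinality of I_{(m+1,m)} is the binomial coefficient C(m+4, 4). -/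
section AuxCounting

open Finset

/-- 2-simplex -/
def E2 (m : ℕ) : Finset (ℕ × ℕ) :=
  (range (m+1) ×ˢ range (m+1)).filter (fun x => x.1 + x.2 ≤ m)

def E3 (m : ℕ) : Finset (ℕ × ℕ × ℕ) :=
  (range (m+1) ×ˢ range (m+1) ×ˢ range (m+1)).filter (fun x => x.1 + x.2.1 + x.2.2 ≤ m)

def E4 (m : ℕ) : Finset (ℕ × ℕ × ℕ × ℕ) :=
  (range (m+1) ×ˢ range (m+1) ×ˢ range (m+1) ×ˢ range (m+1)).filter
    (fun x => x.1 + x.2.1 + x.2.2.1 + x.2.2.2 ≤ m)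

lemma mem_E2 {m : ℕ} {x : ℕ × ℕ} : x ∈ E2 m ↔ x.1 + x.2 ≤ m := by
  simp [E2, mem_filter, mem_product, mem_range]; omega

lemma mem_E3 {m : ℕ} {x : ℕ × ℕ × ℕ} : x ∈ E3 m ↔ x.1 + x.2.1 + x.2.2 ≤ m := by
  simp [E3, mem_filter, mem_product, mem_range]; omega

lemma mem_E4 {m : ℕ} {x : ℕ × ℕ × ℕ × ℕ} : x ∈ E4 m ↔ x.1 + x.2.1 + x.2.2.1 + x.2.2.2 ≤ m := by
  simp [E4, mem_filter, mem_product, mem_range]; omega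

lemma card_E2 (m : ℕ) : (E2 m).card = (m+2).choose 2 := by
  induction m with
  | zero => decide
  | succ n ih =>
    have hsplit : (E2 (n+1)).card
        = ((E2 (n+1)).filter (fun x => x.1 + x.2 ≤ n)).card
          + ((E2 (n+1)).filter (fun x => ¬ (x.1 + x.2 ≤ n))).card :=
      (card_filter_add_card_filter_not _).symm
    have h1 : (E2 (n+1)).filter (fun x => x.1 + x.2 ≤ n) = E2 n := by
      ext x; simp [mem_filter, mem_E2]; omega
    have h2 : ((E2 (n+1)).filter (fun x => ¬ (x.1 + x.2 ≤ n))).card = n + 2 := by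
      have : ((E2 (n+1)).filter (fun x => ¬ (x.1 + x.2 ≤ n))).card
          = (range (n+2)).card := by
        apply card_nbij' (fun x => x.1) (fun a => (a, n+1-a))
        · intro x hx; simp only [mem_coe, mem_filter, mem_E2] at hx; simp [mem_range]; omega
        · intro a ha; simp only [mem_coe, mem_range] at ha; simp [mem_filter, mem_E2]; omega
        · intro x hx; simp only [mem_coe, mem_filter, mem_E2] at hx
          ext <;> simp <;> omega
        · intro a ha; simp
      rw [this, card_range]
    rw [hsplit, h1, h2, ih]
    rw [Nat.choose_succ_succ (n+2) 1]
    simp [Nat.choose_one_right]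
    omega

lemma card_E3 (m : ℕ) : (E3 m).card = (m+3).choose 3 := by
  induction m with
  | zero => decide
  | succ n ih =>
    have hsplit : (E3 (n+1)).card
        = ((E3 (n+1)).filter (fun x => x.1 + x.2.1 + x.2.2 ≤ n)).card
          + ((E3 (n+1)).filter (fun x => ¬ (x.1 + x.2.1 + x.2.2 ≤ n))).card :=
      (card_filter_add_card_filter_not _).symm
    have h1 : (E3 (n+1)).filter (fun x => x.1 + x.2.1 + x.2.2 ≤ n) = E3 n := by
      ext x; simp [mem_filter, mem_E3]; omega
    have h2 : ((E3 (n+1)).filter (fun x => ¬ (x.1 + x.2.1 + x.2.2 ≤ n))).card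
        = (E2 (n+1)).card := by
      apply card_nbij' (fun x => (x.1, x.2.1)) (fun a => (a.1, a.2, n+1-a.1-a.2))
      · intro x hx; simp only [mem_coe, mem_filter, mem_E3] at hx; simp [mem_E2]; omega
      · intro a ha; simp only [mem_coe, mem_E2] at ha; simp [mem_filter, mem_E3]; omega
      · intro x hx; simp only [mem_coe, mem_filter, mem_E3] at hx
        ext <;> simp <;> omega
      · intro a ha; simp
    rw [hsplit, h1, h2, ih, card_E2]
    have h3 : (n+1+3).choose 3 = (n+3).choose 2 + (n+3).choose 3 := by
      simpa [show n+3+1 = n+1+3 by ring] using Nat.choose_succ_succ (n+3) 2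
    have h4 : (n+1+2).choose 2 = (n+3).choose 2 := by
      rw [show n+1+2 = n+3 from by ring]
    omega

lemma card_E4 (m : ℕ) : (E4 m).card = (m+4).choose 4 := by
  induction m with
  | zero => decide
  | succ n ih =>
    have hsplit : (E4 (n+1)).card
        = ((E4 (n+1)).filter (fun x => x.1 + x.2.1 + x.2.2.1 + x.2.2.2 ≤ n)).card
          + ((E4 (n+1)).filter (fun x => ¬ (x.1 + x.2.1 + x.2.2.1 + x.2.2.2 ≤ n))).card :=
      (card_filter_add_card_filter_not _).symm
    have h1 : (E4 (n+1)).filter (fun x => x.1 + x.2.1 + x.2.2.1 + x.2.2.2 ≤ n) = E4 n := by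
      ext x; simp [mem_filter, mem_E4]; omega
    have h2 : ((E4 (n+1)).filter (fun x => ¬ (x.1 + x.2.1 + x.2.2.1 + x.2.2.2 ≤ n))).card
        = (E3 (n+1)).card := by
      apply card_nbij' (fun x => (x.1, x.2.1, x.2.2.1))
        (fun a => (a.1, a.2.1, a.2.2, n+1-a.1-a.2.1-a.2.2))
      · intro x hx; simp only [mem_coe, mem_filter, mem_E4] at hx; simp [mem_E3]; omega
      · intro a ha; simp only [mem_coe, mem_E3] at ha; simp [mem_filter, mem_E4]; omega
      · intro x hx; simp only [mem_coe, mem_filter, mem_E4] at hx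
        ext <;> simp <;> omega
      · intro a ha; simp
    rw [hsplit, h1, h2, ih, card_E3]
    have h3 : (n+1+4).choose 4 = (n+4).choose 3 + (n+4).choose 4 := by
      simpa [show n+4+1 = n+1+4 by ring] using Nat.choose_succ_succ (n+4) 3
    have h4 : (n+1+3).choose 3 = (n+4).choose 3 := by
      rw [show n+1+3 = n+4 from by ring]
    omega

/-- The finset of feasible quadruples `(i,j,t,p)`. -/
noncomputable def Fq (m : ℕ) : Finset (ℤ × ℤ × ℤ × ℤ) :=
  (Finset.Icc (0:ℤ) m ×ˢ Finset.Icc (0:ℤ) m ×ˢ Finset.Icc (0:ℤ) (m+1) ×ˢ Finset.Icc (0:ℤ) m).filter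
    (fun q => 0 ≤ q.2.2.2 ∧ q.2.2.2 ≤ q.1 ∧ q.2.2.2 ≤ q.2.1 ∧ q.2.2.2 ≤ q.2.2.1 ∧
      q.1 + q.2.1 - q.2.2.2 ≤ m ∧ q.2.1 + q.2.2.1 - q.2.2.2 ≤ m ∧
      q.1 + q.2.2.1 - q.2.2.2 ≤ m + 1 ∧ (m:ℤ) ≤ q.1 + q.2.1 + q.2.2.1 - q.2.2.2)

lemma mem_Fq {m : ℕ} {q : ℤ × ℤ × ℤ × ℤ} : q ∈ Fq m ↔
    (0 ≤ q.2.2.2 ∧ q.2.2.2 ≤ q.1 ∧ q.2.2.2 ≤ q.2.1 ∧ q.2.2.2 ≤ q.2.2.1 ∧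
      q.1 + q.2.1 - q.2.2.2 ≤ m ∧ q.2.1 + q.2.2.1 - q.2.2.2 ≤ m ∧
      q.1 + q.2.2.1 - q.2.2.2 ≤ m + 1 ∧ (m:ℤ) ≤ q.1 + q.2.1 + q.2.2.1 - q.2.2.2) := by
  simp only [Fq, mem_filter, mem_product, Finset.mem_Icc]
  constructor
  · tauto
  · intro h; refine ⟨⟨?_, ?_, ?_, ?_⟩, h⟩ <;> constructor <;> omega

lemma card_Fq (m : ℕ) : (Fq m).card = (E4 m).card := by
  have hF := card_filter_add_card_filter_not
    (s := Fq m) (p := fun q => q.1 + q.2.1 + q.2.2.1 - 2 * q.2.2.2 ≤ (m:ℤ))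
  have hE := card_filter_add_card_filter_not
    (s := E4 m) (p := fun x => m ≤ 2 * x.1 + x.2.1 + x.2.2.1 + x.2.2.2)
  have h1 : ((Fq m).filter (fun q => q.1 + q.2.1 + q.2.2.1 - 2 * q.2.2.2 ≤ (m:ℤ))).card
      = ((E4 m).filter (fun x => m ≤ 2 * x.1 + x.2.1 + x.2.2.1 + x.2.2.2)).card := by
    apply card_nbij'
      (fun (q : ℤ×ℤ×ℤ×ℤ) => ((q.2.2.2).toNat, (q.1 - q.2.2.2).toNat, (q.2.1 - q.2.2.2).toNat,
          (q.2.2.1 - q.2.2.2).toNat))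
      (fun (x : ℕ×ℕ×ℕ×ℕ) => (((x.1:ℤ) + x.2.1, (x.1:ℤ) + x.2.2.1, (x.1:ℤ) + x.2.2.2, (x.1:ℤ))))
    · intro q hq
      rw [mem_coe, mem_filter, mem_Fq] at hq
      rw [mem_coe, mem_filter, mem_E4]
      dsimp only
      omega
    · intro x hx
      rw [mem_coe, mem_filter, mem_E4] at hx
      rw [mem_coe, mem_filter, mem_Fq]
      dsimp only
      omega
    · intro q hq
      rw [mem_coe, mem_filter, mem_Fq] at hq
      obtain ⟨i, j, t, p⟩ := q
      dsimp only at hq ⊢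
      simp only [Prod.mk.injEq]
      omega
    · intro x hx
      rw [mem_coe, mem_filter, mem_E4] at hx
      obtain ⟨a, b, c, e⟩ := x
      dsimp only at hx ⊢
      simp only [Prod.mk.injEq]
      omega
  have h2 : ((Fq m).filter (fun q => ¬ (q.1 + q.2.1 + q.2.2.1 - 2 * q.2.2.2 ≤ (m:ℤ)))).card
      = ((E4 m).filter (fun x => ¬ (m ≤ 2 * x.1 + x.2.1 + x.2.2.1 + x.2.2.2))).card := by
    apply card_nbij'
      (fun (q : ℤ×ℤ×ℤ×ℤ) => (((q.1 + q.2.1 + q.2.2.1 - 2 * q.2.2.2 - m - 1 : ℤ)).toNat,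
          ((q.1 - q.2.2.2 - 1 - (q.1 + q.2.1 + q.2.2.1 - 2 * q.2.2.2 - m - 1) : ℤ)).toNat,
          ((q.2.1 - q.2.2.2 - (q.1 + q.2.1 + q.2.2.1 - 2 * q.2.2.2 - m - 1) : ℤ)).toNat,
          ((q.2.2.1 - q.2.2.2 - 1 - (q.1 + q.2.1 + q.2.2.1 - 2 * q.2.2.2 - m - 1) : ℤ)).toNat))
      (fun (x : ℕ×ℕ×ℕ×ℕ) => (((m:ℤ) - 1 - (2*x.1 + x.2.1 + x.2.2.1 + x.2.2.2) + x.1 + x.2.1 + 1,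
          (m:ℤ) - 1 - (2*x.1 + x.2.1 + x.2.2.1 + x.2.2.2) + x.1 + x.2.2.1,
          (m:ℤ) - 1 - (2*x.1 + x.2.1 + x.2.2.1 + x.2.2.2) + x.1 + x.2.2.2 + 1,
          (m:ℤ) - 1 - (2*x.1 + x.2.1 + x.2.2.1 + x.2.2.2))))
    · intro q hq
      rw [mem_coe, mem_filter, mem_Fq] at hq
      rw [mem_coe, mem_filter, mem_E4]
      dsimp only
      omega
    · intro x hx
      rw [mem_coe, mem_filter, mem_E4] at hx
      rw [mem_coe, mem_filter, mem_Fq]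
      dsimp only
      omega
    · intro q hq
      rw [mem_coe, mem_filter, mem_Fq] at hq
      obtain ⟨i, j, t, p⟩ := q
      dsimp only at hq ⊢
      simp only [Prod.mk.injEq]
      omega
    · intro x hx
      rw [mem_coe, mem_filter, mem_E4] at hx
      obtain ⟨a, b, c, e⟩ := x
      dsimp only at hx ⊢
      simp only [Prod.mk.injEq]
      omega
  omega

lemma rho_mem {m : ℕ} {x0 y z : Finset (Fin (2*m+1))} (hx0 : x0.card = m)
    (hy : y.card = m+1) (hz : z.card = m) : rho x0 y z ∈ Fq m := by
  rw [mem_Fq]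
  have e1 : (x0 ∩ y) ∩ (x0 ∩ z) = x0 ∩ y ∩ z := by ext u; simp; try tauto
  have e2 : (x0 ∩ z) ∩ (y ∩ z) = x0 ∩ y ∩ z := by ext u; simp; try tauto
  have e3 : (x0 ∩ y) ∩ (y ∩ z) = x0 ∩ y ∩ z := by ext u; simp; try tauto
  have e4 : (x0 ∪ y) ∩ z = (x0 ∩ z) ∪ (y ∩ z) := by ext u; simp; try tauto
  have c1 := card_union_add_card_inter (x0 ∩ y) (x0 ∩ z)
  have c2 := card_union_add_card_inter (x0 ∩ z) (y ∩ z)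
  have c3 := card_union_add_card_inter (x0 ∩ y) (y ∩ z)
  have c4 := card_union_add_card_inter x0 y
  have c5 := card_union_add_card_inter (x0 ∪ y) z
  rw [e1] at c1; rw [e2] at c2; rw [e3] at c3; rw [e4] at c5
  have b1 : ((x0 ∩ y) ∪ (x0 ∩ z)).card ≤ m :=
    le_trans (card_le_card (union_subset inter_subset_left inter_subset_left)) (le_of_eq hx0)
  have b2 : ((x0 ∩ z) ∪ (y ∩ z)).card ≤ m :=
    le_trans (card_le_card (union_subset inter_subset_right inter_subset_right)) (le_of_eq hz)
  have b3 : ((x0 ∩ y) ∪ (y ∩ z)).card ≤ m + 1 :=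
    le_trans (card_le_card (union_subset inter_subset_right inter_subset_left)) (le_of_eq hy)
  have b4 : ((x0 ∪ y) ∪ z).card ≤ 2*m+1 := by
    have := card_le_univ ((x0 ∪ y) ∪ z)
    simpa using this
  have p1 : (x0 ∩ y ∩ z).card ≤ (x0 ∩ y).card := card_le_card inter_subset_left
  have p2 : (x0 ∩ y ∩ z).card ≤ (x0 ∩ z).card :=
    card_le_card (inter_subset_inter inter_subset_left (Finset.Subset.refl z))
  have p3 : (x0 ∩ y ∩ z).card ≤ (y ∩ z).card :=
    card_le_card (inter_subset_inter inter_subset_right (Finset.Subset.refl z))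
  simp only [rho]
  omega

set_option maxHeartbeats 1600000 in
lemma exists_yz {m : ℕ} (x0 : Finset (Fin (2*m+1))) (hx0 : x0.card = m)
    {q : ℤ × ℤ × ℤ × ℤ} (hq : q ∈ Fq m) :
    ∃ y z : Finset (Fin (2*m+1)), y.card = m+1 ∧ z.card = m ∧ rho x0 y z = q := by
  obtain ⟨i, j, t, p⟩ := q
  rw [mem_Fq] at hq
  dsimp only at hq
  -- natural number region sizes
  set a := p.toNat with ha
  set b := (i - p).toNat with hb
  set c := (j - p).toNat with hc
  set e := (t - p).toNat with he
  set f := ((m:ℤ) + 1 - i - t + p).toNat with hf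
  set g := ((m:ℤ) - j - t + p).toNat with hg
  have hab : (a:ℤ) = p := by omega
  have hbb : (b:ℤ) = i - p := by omega
  have hcb : (c:ℤ) = j - p := by omega
  have heb : (e:ℤ) = t - p := by omega
  have hfb : (f:ℤ) = (m:ℤ) + 1 - i - t + p := by omega
  have hgb : (g:ℤ) = (m:ℤ) - j - t + p := by omega
  -- choose pieces inside x0
  obtain ⟨W, hWs, hWc⟩ := exists_subset_card_eq (show a + b + c ≤ x0.card by omega)
  obtain ⟨V, hVs, hVc⟩ := exists_subset_card_eq (show a + b ≤ W.card by omega)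
  obtain ⟨P, hPs, hPc⟩ := exists_subset_card_eq (show a ≤ V.card by omega)
  -- choose pieces inside x0ᶜ
  have hcompl : (x0ᶜ).card = m + 1 := by
    rw [card_compl, Fintype.card_fin, hx0]; omega
  obtain ⟨W', hWs', hWc'⟩ := exists_subset_card_eq (show e + f + g ≤ (x0ᶜ).card by omega)
  obtain ⟨V', hVs', hVc'⟩ := exists_subset_card_eq (show e + f ≤ W'.card by omega)
  obtain ⟨D, hDs, hDc⟩ := exists_subset_card_eq (show e ≤ V'.card by omega)
  -- basic subset facts
  have hVx0 : V ⊆ x0 := hVs.trans hWs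
  have hPx0 : P ⊆ x0 := hPs.trans hVx0
  have hV'c : V' ⊆ x0ᶜ := hVs'.trans hWs'
  have hDc' : D ⊆ x0ᶜ := hDs.trans hV'c
  -- disjointness
  have dxc : Disjoint x0 (x0ᶜ) := disjoint_compl_right
  have d1 : Disjoint V V' := dxc.mono hVx0 hV'c
  have d2 : Disjoint (P ∪ (W \ V)) (D ∪ (W' \ V')) :=
    dxc.mono (union_subset hPx0 ((sdiff_subset).trans hWs))
      (union_subset hDc' ((sdiff_subset).trans hWs'))
  have d3 : Disjoint P (W \ V) := (disjoint_sdiff).mono_left hPs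
  have d4 : Disjoint D (W' \ V') := (disjoint_sdiff).mono_left hDs
  have cardWV : (W \ V).card = c := by rw [card_sdiff_of_subset hVs]; omega
  have cardWV' : (W' \ V').card = g := by rw [card_sdiff_of_subset hVs']; omega
  -- the two sets
  refine ⟨V ∪ V', (P ∪ (W \ V)) ∪ (D ∪ (W' \ V')), ?_, ?_, ?_⟩
  · -- card y
    rw [card_union_of_disjoint d1, hVc, hVc']; omega
  · -- card z
    rw [card_union_of_disjoint d2, card_union_of_disjoint d3, card_union_of_disjoint d4,
      hPc, hDc, cardWV, cardWV']
    omega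
  · -- rho equality
    have uV : ∀ u, u ∈ V → u ∈ x0 := fun u h => hVx0 h
    have uV' : ∀ u, u ∈ V' → u ∉ x0 := fun u h => mem_compl.mp (hV'c h)
    have uP : ∀ u, u ∈ P → u ∈ V := fun u h => hPs h
    have uD : ∀ u, u ∈ D → u ∈ V' := fun u h => hDs h
    have uW : ∀ u, u ∈ W → u ∈ x0 := fun u h => hWs h
    have uW' : ∀ u, u ∈ W' → u ∉ x0 := fun u h => mem_compl.mp (hWs' h)
    have i1 : x0 ∩ (V ∪ V') = V := by
      ext u
      simp only [mem_inter, mem_union, mem_sdiff, mem_compl]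
      have := uV u; have := uV' u
      tauto
    have i2 : x0 ∩ ((P ∪ (W \ V)) ∪ (D ∪ (W' \ V'))) = P ∪ (W \ V) := by
      ext u
      simp only [mem_inter, mem_union, mem_sdiff, mem_compl]
      have := uV u; have := uV' u; have := uP u; have := uD u; have := uW u; have := uW' u
      tauto
    have i3 : (V ∪ V') ∩ ((P ∪ (W \ V)) ∪ (D ∪ (W' \ V'))) = P ∪ D := by
      ext u
      simp only [mem_inter, mem_union, mem_sdiff, mem_compl]
      have := uV u; have := uV' u; have := uP u; have := uD u; have := uW u; have := uW' u
      tauto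
    have i4 : x0 ∩ (V ∪ V') ∩ ((P ∪ (W \ V)) ∪ (D ∪ (W' \ V'))) = P := by
      rw [i1]
      ext u
      simp only [mem_inter, mem_union, mem_sdiff, mem_compl]
      have := uV u; have := uV' u; have := uP u; have := uD u; have := uW u; have := uW' u
      tauto
    rw [rho, i4, i3, i2, i1, card_union_of_disjoint d3,
      card_union_of_disjoint ((disjoint_compl_right).mono hPx0 hDc'), hVc, hPc, hDc, cardWV]
    simp only [Prod.mk.injEq]
    omega

end AuxCounting

theorem stmt_3 (m : ℕ) (hm : 1 ≤ m) (x0 : Finset (Fin (2*m+1))) (hx0 : x0.card = m) :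
    {q : ℤ × ℤ × ℤ × ℤ | ∃ y z : Finset (Fin (2*m+1)),
        y.card = m+1 ∧ z.card = m ∧ rho x0 y z = q}
      = {q : ℤ × ℤ × ℤ × ℤ | ∃ i j t p : ℤ, q = (i, j, t, p) ∧
          0 ≤ i ∧ i ≤ m ∧ 0 ≤ j ∧ j ≤ m ∧
          |i + j - m| ≤ t ∧ t ≤ m - max (i - j - 1) (j - i) ∧
          j - min (min (m - i) j) (min (m - t) (j - i - t + m + 1)) ≤ p ∧
          p ≤ j - max (max 0 (j - i)) (max (j - t) (m - i - t))} ∧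
    {q : ℤ × ℤ × ℤ × ℤ | ∃ y z : Finset (Fin (2*m+1)),
        y.card = m+1 ∧ z.card = m ∧ rho x0 y z = q}.ncard = (m+4).choose 4 := by
  have hset : {q : ℤ × ℤ × ℤ × ℤ | ∃ y z : Finset (Fin (2*m+1)),
      y.card = m+1 ∧ z.card = m ∧ rho x0 y z = q} = ↑(Fq m) := by
    ext q
    simp only [Set.mem_setOf_eq, Finset.mem_coe]
    constructor
    · rintro ⟨y, z, hy, hz, rfl⟩
      exact rho_mem hx0 hy hz
    · intro hq
      exact exists_yz x0 hx0 hq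
  have hset2 : (↑(Fq m) : Set (ℤ × ℤ × ℤ × ℤ))
      = {q : ℤ × ℤ × ℤ × ℤ | ∃ i j t p : ℤ, q = (i, j, t, p) ∧
          0 ≤ i ∧ i ≤ m ∧ 0 ≤ j ∧ j ≤ m ∧
          |i + j - m| ≤ t ∧ t ≤ m - max (i - j - 1) (j - i) ∧
          j - min (min (m - i) j) (min (m - t) (j - i - t + m + 1)) ≤ p ∧
          p ≤ j - max (max 0 (j - i)) (max (j - t) (m - i - t))} := by
    ext ⟨i, j, t, p⟩
    simp only [Finset.mem_coe, Set.mem_setOf_eq, mem_Fq]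
    constructor
    · intro h
      refine ⟨i, j, t, p, rfl, by omega, by omega, by omega, by omega,
        abs_le.mpr ⟨by omega, by omega⟩, by omega, by omega, by omega⟩
    · rintro ⟨i', j', t', p', heq, h1, h2, h3, h4, h5, h6, h7, h8⟩
      simp only [Prod.mk.injEq] at heq
      obtain ⟨rfl, rfl, rfl, rfl⟩ := heq
      rw [abs_le] at h5
      omega
  refine ⟨hset.trans hset2, ?_⟩
  rw [hset, Set.ncard_coe_finset, card_Fq, card_E4]
end

section
/- For every m ≥ 1, the map (i,j,t,p) ↦ (i, m−j, m−t, i−p) is a bijection from the set I_{(m,m+1)} onto the set I_{(m,m)}. In particular, |I_{(m,m+1)}| = |I_{(m,m)}|. -/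
/-!
Replacing `z` by its complement `zᶜ` swaps `|z| = m + 1` and `|z| = m` (as `|S| = 2m + 1`), and,
since `|x0| = |y| = m`, it transforms `ρ(y, z)` exactly by the involution
`(i, j, t, p) ↦ (i, m - j, m - t, i - p)`. An involution mapping each of two sets into the other
is a bijection between them.
-/

def rhoFlip (m : ℤ) (q : ℤ × ℤ × ℤ × ℤ) : ℤ × ℤ × ℤ × ℤ :=
  (q.1, m - q.2.1, m - q.2.2.1, q.1 - q.2.2.2)

lemma rhoFlip_involutive (m : ℤ) : Function.Involutive (rhoFlip m) := by
  intro q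
  simp only [rhoFlip, sub_sub_cancel]

/-- The set `I_{(k,l)}`. -/
def rhoImage {n : ℕ} (x0 : Finset (Fin n)) (k l : ℕ) : Set (ℤ × ℤ × ℤ × ℤ) :=
  {q | ∃ y z : Finset (Fin n), y.card = k ∧ z.card = l ∧ rho x0 y z = q}

section

variable {n m : ℕ} {x0 : Finset (Fin n)}

lemma rho_compl_right (hx0 : x0.card = m) {y : Finset (Fin n)} (hy : y.card = m)
    (z : Finset (Fin n)) : rho x0 y zᶜ = rhoFlip m (rho x0 y z) := by
  have hx0z := Finset.card_sdiff_add_card_inter x0 z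
  have hyz := Finset.card_sdiff_add_card_inter y z
  have hx0yz := Finset.card_sdiff_add_card_inter (x0 ∩ y) z
  simp only [rho, rhoFlip, ← Finset.sdiff_eq_inter_compl, Prod.mk.injEq, true_and]
  omega

lemma mapsTo_rhoFlip_rhoImage (hx0 : x0.card = m) {k l : ℕ} (hkl : k + l = n) :
    Set.MapsTo (rhoFlip m) (rhoImage x0 m k) (rhoImage x0 m l) := by
  rintro _ ⟨y, z, hy, hz, rfl⟩
  refine ⟨y, zᶜ, hy, ?_, rho_compl_right hx0 hy z⟩
  rw [Finset.card_compl, Fintype.card_fin]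
  omega

lemma bijOn_rhoFlip_rhoImage (hx0 : x0.card = m) {k l : ℕ} (hkl : k + l = n) :
    Set.BijOn (rhoFlip m) (rhoImage x0 m k) (rhoImage x0 m l) :=
  Set.InvOn.bijOn ⟨fun q _ ↦ rhoFlip_involutive m q, fun q _ ↦ rhoFlip_involutive m q⟩
    (mapsTo_rhoFlip_rhoImage hx0 hkl) (mapsTo_rhoFlip_rhoImage hx0 (by omega))

end

theorem stmt_5_general (m : ℕ) (x0 : Finset (Fin (2*m+1))) (hx0 : x0.card = m) :
    Set.BijOn
      (fun q : ℤ × ℤ × ℤ × ℤ => (q.1, (m : ℤ) - q.2.1, (m : ℤ) - q.2.2.1, q.1 - q.2.2.2))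
      {q : ℤ × ℤ × ℤ × ℤ | ∃ y z : Finset (Fin (2*m+1)),
        y.card = m ∧ z.card = m+1 ∧ rho x0 y z = q}
      {q : ℤ × ℤ × ℤ × ℤ | ∃ y z : Finset (Fin (2*m+1)),
        y.card = m ∧ z.card = m ∧ rho x0 y z = q} ∧
    {q : ℤ × ℤ × ℤ × ℤ | ∃ y z : Finset (Fin (2*m+1)),
        y.card = m ∧ z.card = m+1 ∧ rho x0 y z = q}.ncard =
    {q : ℤ × ℤ × ℤ × ℤ | ∃ y z : Finset (Fin (2*m+1)),
        y.card = m ∧ z.card = m ∧ rho x0 y z = q}.ncard := by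
  have hbij : Set.BijOn (rhoFlip m) (rhoImage x0 m (m + 1)) (rhoImage x0 m m) :=
    bijOn_rhoFlip_rhoImage hx0 (by omega)
  exact ⟨hbij, hbij.ncard_eq⟩

theorem stmt_5 (m : ℕ) (hm : 1 ≤ m) (x0 : Finset (Fin (2*m+1))) (hx0 : x0.card = m) :
    Set.BijOn
      (fun q : ℤ × ℤ × ℤ × ℤ => (q.1, (m : ℤ) - q.2.1, (m : ℤ) - q.2.2.1, q.1 - q.2.2.2))
      {q : ℤ × ℤ × ℤ × ℤ | ∃ y z : Finset (Fin (2*m+1)),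
        y.card = m ∧ z.card = m+1 ∧ rho x0 y z = q}
      {q : ℤ × ℤ × ℤ × ℤ | ∃ y z : Finset (Fin (2*m+1)),
        y.card = m ∧ z.card = m ∧ rho x0 y z = q} ∧
    {q : ℤ × ℤ × ℤ × ℤ | ∃ y z : Finset (Fin (2*m+1)),
        y.card = m ∧ z.card = m+1 ∧ rho x0 y z = q}.ncard =
    {q : ℤ × ℤ × ℤ × ℤ | ∃ y z : Finset (Fin (2*m+1)),
        y.card = m ∧ z.card = m ∧ rho x0 y z = q}.ncard :=
  stmt_5_general m x0 hx0
end

section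
/- Let m ≥ 1 and let y, z, y', z' ⊆ S with |y| = |z| = |y'| = |z'| = m. Then there exists a permutation σ of S with σ(x0) = x0 (setwise), σ(y) = y' and σ(z) = z' if and only if ρ(y,z) = ρ(y',z'). In other words, the sets X_{(m,m)}^{(i,j,t,p)} := { (y,z) : |y| = |z| = m, ρ(y,z) = (i,j,t,p) }, for (i,j,t,p) ∈ I_{(m,m)}, are exactly the orbits of the setwise stabilizer of x0 in Sym(S) acting diagonally on pairs of m-subsets of S. -/
open Finset

theorem Equiv.Perm.exists_comp_eq_iff_card_fiber_eq {α β : Type*} [Fintype α] [DecidableEq β]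
    (f g : α → β) :
    (∃ σ : Equiv.Perm α, g ∘ σ = f) ↔
      ∀ b, Fintype.card {a // f a = b} = Fintype.card {a // g a = b} := by
  constructor
  · rintro ⟨σ, rfl⟩ b
    exact Fintype.card_congr (σ.subtypeEquiv fun _ ↦ Iff.rfl)
  · intro h
    exact ⟨Equiv.ofFiberEquiv fun b ↦ Fintype.equivOfCardEq (h b),
      funext (Equiv.ofFiberEquiv_map _)⟩

theorem eq_of_forall_sum_Ici_eq {α : Type*} [PartialOrder α] [OrderTop α] [LocallyFiniteOrder α]
    {f g : α → ℕ} (h : ∀ x, ∑ y ∈ Ici x, f y = ∑ y ∈ Ici x, g y) : f = g := by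
  classical
  funext x
  have hcast : ∀ x, ∑ y ∈ Ici x, (f y : ℤ) = ∑ y ∈ Ici x, (g y : ℤ) := by exact_mod_cast h
  have hf := IncidenceAlgebra.moebius_inversion_top (fun y ↦ (f y : ℤ)) _ (fun _ ↦ rfl) x
  have hg := IncidenceAlgebra.moebius_inversion_top (fun y ↦ (g y : ℤ)) _ (fun _ ↦ rfl) x
  simp only [hcast] at hf
  exact_mod_cast hf.trans hg.symm

namespace Finset

theorem image_perm_eq_iff {α : Type*} [DecidableEq α] (s t : Finset α) (σ : Equiv.Perm α) :
    s.image σ = t ↔ ∀ a, σ a ∈ t ↔ a ∈ s := by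
  rw [Finset.ext_iff, ← σ.forall_congr_right]
  simp only [mem_image, σ.injective.eq_iff, exists_eq_right]
  exact forall_congr' fun _ ↦ iff_comm

variable {ι α : Type*} [Fintype ι] [DecidableEq α]

def vennRegion (A : ι → Finset α) (a : α) : Finset ι := {i | a ∈ A i}

theorem image_perm_eq_iff_vennRegion (A B : ι → Finset α) (σ : Equiv.Perm α) :
    (∀ i, (A i).image σ = B i) ↔ vennRegion B ∘ σ = vennRegion A := by
  simp only [image_perm_eq_iff, funext_iff]
  simp only [Finset.ext_iff, vennRegion, Function.comp_apply, mem_filter_univ]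
  exact forall_comm

variable [DecidableEq ι] [Fintype α]

theorem sum_Ici_card_vennRegion_eq (A : ι → Finset α) (J : Finset ι) :
    ∑ T ∈ Ici J, Fintype.card {a // vennRegion A a = T} = #(J.inf A) := by
  simp only [Fintype.card_subtype]
  rw [sum_card_fiberwise_eq_card_filter]
  congr 1
  ext a
  simp [vennRegion, Finset.mem_inf, subset_iff]

theorem exists_perm_image_eq_iff_card_inf_eq (A B : ι → Finset α) :
    (∃ σ : Equiv.Perm α, ∀ i, (A i).image σ = B i) ↔ ∀ J : Finset ι, #(J.inf A) = #(J.inf B) := by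
  simp only [image_perm_eq_iff_vennRegion, Equiv.Perm.exists_comp_eq_iff_card_fiber_eq]
  refine ⟨fun h J ↦ ?_, fun h ↦ congrFun (eq_of_forall_sum_Ici_eq fun J ↦ ?_)⟩
  · simp only [← sum_Ici_card_vennRegion_eq, h]
  · simp only [sum_Ici_card_vennRegion_eq, h]

end Finset

theorem stmt_6_general (m : ℕ) (x0 : Finset (Fin (2*m+1)))
    (y z y' z' : Finset (Fin (2*m+1)))
    (hy : y.card = m) (hz : z.card = m) (hy' : y'.card = m) (hz' : z'.card = m) :
    (∃ σ : Equiv.Perm (Fin (2*m+1)),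
        x0.image σ = x0 ∧ y.image σ = y' ∧ z.image σ = z') ↔
      rho x0 y z = rho x0 y' z' := by
  have key := exists_perm_image_eq_iff_card_inf_eq ![x0, y, z] ![x0, y', z']
  simp only [Fin.forall_fin_succ, IsEmpty.forall_iff, and_true, Matrix.cons_val_zero,
    Matrix.cons_val_succ] at key
  rw [key, rho, rho]
  simp only [Prod.mk.injEq, Nat.cast_inj]
  constructor
  · intro h
    exact ⟨by simpa using h {0, 1}, by simpa using h {0, 2}, by simpa using h {1, 2},
      by simpa [inter_assoc] using h {0, 1, 2}⟩
  · rintro ⟨h01, h02, h12, h012⟩ J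
    obtain rfl | rfl | rfl | rfl | rfl | rfl | rfl | rfl : J = ∅ ∨ J = {0} ∨ J = {1} ∨ J = {2} ∨
        J = {0, 1} ∨ J = {0, 2} ∨ J = {1, 2} ∨ J = {0, 1, 2} := by
      revert J; decide
    all_goals simp [← inter_assoc, hy, hz, hy', hz', h01, h02, h12, h012]

theorem stmt_6 (m : ℕ) (hm : 1 ≤ m) (x0 : Finset (Fin (2*m+1))) (hx0 : x0.card = m)
    (y z y' z' : Finset (Fin (2*m+1)))
    (hy : y.card = m) (hz : z.card = m) (hy' : y'.card = m) (hz' : z'.card = m) :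
    (∃ σ : Equiv.Perm (Fin (2*m+1)),
        x0.image σ = x0 ∧ y.image σ = y' ∧ z.image σ = z') ↔
      rho x0 y z = rho x0 y' z' :=
  stmt_6_general m x0 y z y' z' hy hz hy' hz'
end

section
/- For every m ≥ 1, the orbit indicator matrices N_{(a,b)}^q, ranging over the four size-pairs (a,b) ∈ {(m,m),(m,m+1),(m+1,m),(m+1,m+1)} and over q ∈ I_{(a,b)}, form a basis of the centralizer algebra 𝒜 as a ℂ-vector space (they are linearly independent and span 𝒜). -/
section Stmt8Aux

open Finset

variable {n : ℕ}

private def pat3 (A B C : Finset (Fin n)) (i : Fin n) : Bool × Bool × Bool :=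
  (decide (i ∈ A), decide (i ∈ B), decide (i ∈ C))

private lemma count_split3 (A B C : Finset (Fin n)) (P : Fin n → Prop) [DecidablePred P]
    (t : Finset (Bool × Bool × Bool))
    (h1 : ∀ i, P i → pat3 A B C i ∈ t)
    (h2 : ∀ i, ∀ b ∈ t, pat3 A B C i = b → P i) :
    (univ.filter P).card = ∑ b ∈ t, (univ.filter (fun i => pat3 A B C i = b)).card := by
  rw [Finset.card_eq_sum_card_fiberwise (f := pat3 A B C) (t := t)
    (fun i hi => h1 i (Finset.mem_filter.mp hi).2)]
  refine Finset.sum_congr rfl fun b hb => ?_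
  rw [Finset.filter_filter]
  congr 1
  apply Finset.filter_congr
  intro i _
  exact ⟨fun h => h.2, fun h => ⟨h2 i b hb h, h⟩⟩

private noncomputable def fib3 (A B C : Finset (Fin n)) (b : Bool × Bool × Bool) : ℕ :=
  (univ.filter (fun i => pat3 A B C i = b)).card

private lemma agg_ABC (A B C : Finset (Fin n)) :
    (A ∩ B ∩ C).card = fib3 A B C (true, true, true) := by
  have : A ∩ B ∩ C = univ.filter (fun i => pat3 A B C i = (true, true, true)) := by
    ext i; simp [pat3, Prod.ext_iff]
  rw [this]; rfl

private lemma agg_AB (A B C : Finset (Fin n)) :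
    (A ∩ B).card = fib3 A B C (true, true, true) + fib3 A B C (true, true, false) := by
  have h : (A ∩ B).card = (univ.filter (fun i => i ∈ A ∧ i ∈ B)).card := by
    congr 1; ext i; simp
  rw [h, count_split3 A B C _ {(true, true, true), (true, true, false)}
    (by intro i hi; by_cases hc : i ∈ C <;> simp [pat3, hi.1, hi.2, hc])
    (by intro i b hb hp; fin_cases hb <;> simp [pat3, Prod.ext_iff] at hp <;>
        exact ⟨hp.1, hp.2.1⟩),
    Finset.sum_pair (by decide)]
  rfl

private lemma agg_AC (A B C : Finset (Fin n)) :
    (A ∩ C).card = fib3 A B C (true, true, true) + fib3 A B C (true, false, true) := by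
  have h : (A ∩ C).card = (univ.filter (fun i => i ∈ A ∧ i ∈ C)).card := by
    congr 1; ext i; simp
  rw [h, count_split3 A B C _ {(true, true, true), (true, false, true)}
    (by intro i hi; by_cases hb : i ∈ B <;> simp [pat3, hi.1, hi.2, hb])
    (by intro i b hb hp; fin_cases hb <;> simp [pat3, Prod.ext_iff] at hp <;>
        exact ⟨hp.1, hp.2.2⟩),
    Finset.sum_pair (by decide)]
  rfl

private lemma agg_BC (A B C : Finset (Fin n)) :
    (B ∩ C).card = fib3 A B C (true, true, true) + fib3 A B C (false, true, true) := by
  have h : (B ∩ C).card = (univ.filter (fun i => i ∈ B ∧ i ∈ C)).card := by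
    congr 1; ext i; simp
  rw [h, count_split3 A B C _ {(true, true, true), (false, true, true)}
    (by intro i hi; by_cases ha : i ∈ A <;> simp [pat3, hi.1, hi.2, ha])
    (by intro i b hb hp; fin_cases hb <;> simp [pat3, Prod.ext_iff] at hp <;>
        exact ⟨hp.2.1, hp.2.2⟩),
    Finset.sum_pair (by decide)]
  rfl

private lemma agg_A (A B C : Finset (Fin n)) :
    A.card = fib3 A B C (true, true, true) + fib3 A B C (true, true, false)
      + fib3 A B C (true, false, true) + fib3 A B C (true, false, false) := by
  have h : A.card = (univ.filter (fun i => i ∈ A)).card := by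
    congr 1; ext i; simp
  rw [h, count_split3 A B C _
    {(true, true, true), (true, true, false), (true, false, true), (true, false, false)}
    (by intro i hi; by_cases hb : i ∈ B <;> by_cases hc : i ∈ C <;> simp [pat3, hi, hb, hc])
    (by intro i b hb hp; fin_cases hb <;> simp [pat3, Prod.ext_iff] at hp <;> exact hp.1)]
  rw [Finset.sum_insert (by decide), Finset.sum_insert (by decide),
    Finset.sum_pair (by decide)]
  simp only [fib3]
  omega

private lemma agg_B (A B C : Finset (Fin n)) :
    B.card = fib3 A B C (true, true, true) + fib3 A B C (true, true, false)
      + fib3 A B C (false, true, true) + fib3 A B C (false, true, false) := by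
  have h : B.card = (univ.filter (fun i => i ∈ B)).card := by
    congr 1; ext i; simp
  rw [h, count_split3 A B C _
    {(true, true, true), (true, true, false), (false, true, true), (false, true, false)}
    (by intro i hi; by_cases ha : i ∈ A <;> by_cases hc : i ∈ C <;> simp [pat3, hi, ha, hc])
    (by intro i b hb hp; fin_cases hb <;> simp [pat3, Prod.ext_iff] at hp <;> exact hp.2.1)]
  rw [Finset.sum_insert (by decide), Finset.sum_insert (by decide),
    Finset.sum_pair (by decide)]
  simp only [fib3]
  omega

private lemma agg_C (A B C : Finset (Fin n)) :
    C.card = fib3 A B C (true, true, true) + fib3 A B C (true, false, true)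
      + fib3 A B C (false, true, true) + fib3 A B C (false, false, true) := by
  have h : C.card = (univ.filter (fun i => i ∈ C)).card := by
    congr 1; ext i; simp
  rw [h, count_split3 A B C _
    {(true, true, true), (true, false, true), (false, true, true), (false, false, true)}
    (by intro i hi; by_cases ha : i ∈ A <;> by_cases hb : i ∈ B <;> simp [pat3, hi, ha, hb])
    (by intro i b hb hp; fin_cases hb <;> simp [pat3, Prod.ext_iff] at hp <;> exact hp.2.2)]
  rw [Finset.sum_insert (by decide), Finset.sum_insert (by decide),
    Finset.sum_pair (by decide)]
  simp only [fib3]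
  omega

private lemma agg_univ (A B C : Finset (Fin n)) :
    n = fib3 A B C (true, true, true) + fib3 A B C (true, true, false)
      + fib3 A B C (true, false, true) + fib3 A B C (true, false, false)
      + fib3 A B C (false, true, true) + fib3 A B C (false, true, false)
      + fib3 A B C (false, false, true) + fib3 A B C (false, false, false) := by
  have h : n = (univ.filter (fun _ : Fin n => True)).card := by simp
  conv_lhs => rw [h]
  rw [count_split3 A B C _
    {(true, true, true), (true, true, false), (true, false, true), (true, false, false),
     (false, true, true), (false, true, false), (false, false, true), (false, false, false)}
    (by intro i _; by_cases ha : i ∈ A <;> by_cases hb : i ∈ B <;> by_cases hc : i ∈ C <;>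
        simp [pat3, ha, hb, hc])
    (by intro i b _ _; trivial)]
  rw [Finset.sum_insert (by decide), Finset.sum_insert (by decide),
    Finset.sum_insert (by decide), Finset.sum_insert (by decide),
    Finset.sum_insert (by decide), Finset.sum_insert (by decide),
    Finset.sum_pair (by decide)]
  simp only [fib3]
  omega

private lemma exists_perm_of_fiber_card {α β : Type*} [Fintype α] [DecidableEq α] [DecidableEq β]
    (f g : α → β)
    (h : ∀ b, (univ.filter (fun i => f i = b)).card = (univ.filter (fun i => g i = b)).card) :
    ∃ σ : Equiv.Perm α, ∀ i, g (σ i) = f i := by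
  have e : ∀ b, {i // f i = b} ≃ {i // g i = b} := fun b =>
    Fintype.equivOfCardEq (by simp only [Fintype.card_subtype]; exact h b)
  refine ⟨(Equiv.sigmaFiberEquiv f).symm.trans
    ((Equiv.sigmaCongrRight e).trans (Equiv.sigmaFiberEquiv g)), fun i => ?_⟩
  exact (e (f i) ⟨i, rfl⟩).2

private lemma image_eq_of_iff {α : Type*} [DecidableEq α] (σ : Equiv.Perm α) (S T : Finset α)
    (h : ∀ i, σ i ∈ T ↔ i ∈ S) : S.image σ = T := by
  ext j
  simp only [Finset.mem_image]
  constructor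
  · rintro ⟨i, hi, rfl⟩; exact (h i).2 hi
  · intro hj
    exact ⟨σ.symm j, (h (σ.symm j)).1 (by simpa using hj), by simp⟩

private lemma fib_eq3 (A B C B' C' : Finset (Fin n))
    (hB : B.card = B'.card) (hC : C.card = C'.card)
    (h1 : (A ∩ B).card = (A ∩ B').card)
    (h2 : (A ∩ C).card = (A ∩ C').card)
    (h3 : (B ∩ C).card = (B' ∩ C').card)
    (h4 : (A ∩ B ∩ C).card = (A ∩ B' ∩ C').card) :
    ∀ b, fib3 A B C b = fib3 A B' C' b := by
  have a1 := agg_ABC A B C; have a1' := agg_ABC A B' C'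
  have a2 := agg_AB A B C; have a2' := agg_AB A B' C'
  have a3 := agg_AC A B C; have a3' := agg_AC A B' C'
  have a4 := agg_BC A B C; have a4' := agg_BC A B' C'
  have a5 := agg_A A B C; have a5' := agg_A A B' C'
  have a6 := agg_B A B C; have a6' := agg_B A B' C'
  have a7 := agg_C A B C; have a7' := agg_C A B' C'
  have a8 := agg_univ A B C; have a8' := agg_univ A B' C'
  rintro ⟨t1, t2, t3⟩
  cases t1 <;> cases t2 <;> cases t3 <;> omega

private lemma exists_perm_triple (A B C B' C' : Finset (Fin n))
    (hB : B.card = B'.card) (hC : C.card = C'.card)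
    (h1 : (A ∩ B).card = (A ∩ B').card)
    (h2 : (A ∩ C).card = (A ∩ C').card)
    (h3 : (B ∩ C).card = (B' ∩ C').card)
    (h4 : (A ∩ B ∩ C).card = (A ∩ B' ∩ C').card) :
    ∃ σ : Equiv.Perm (Fin n), A.image σ = A ∧ B.image σ = B' ∧ C.image σ = C' := by
  obtain ⟨σ, hσ⟩ := exists_perm_of_fiber_card (pat3 A B C) (pat3 A B' C')
    (fib_eq3 A B C B' C' hB hC h1 h2 h3 h4)
  have hA : ∀ i, σ i ∈ A ↔ i ∈ A := fun i => by
    have := congrArg (fun p => p.1) (hσ i)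
    simpa [pat3] using this
  have hB2 : ∀ i, σ i ∈ B' ↔ i ∈ B := fun i => by
    have := congrArg (fun p => p.2.1) (hσ i)
    simpa [pat3] using this
  have hC2 : ∀ i, σ i ∈ C' ↔ i ∈ C := fun i => by
    have := congrArg (fun p => p.2.2) (hσ i)
    simpa [pat3] using this
  exact ⟨σ, image_eq_of_iff σ A A hA, image_eq_of_iff σ B B' hB2, image_eq_of_iff σ C C' hC2⟩

end Stmt8Aux

instance (m : ℕ) : Fintype (DoubledOddVertex m) := by
  unfold DoubledOddVertex; infer_instance

instance (m : ℕ) : DecidableEq (DoubledOddVertex m) := by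
  unfold DoubledOddVertex; infer_instance

/-- The action of a permutation of `Fin (2m+1)` on vertices, by taking images. -/
def permAct (m : ℕ) (σ : Equiv.Perm (Fin (2*m+1))) (y : DoubledOddVertex m) :
    DoubledOddVertex m :=
  ⟨y.val.image σ, by
    rcases y.2 with h | h
    · exact Or.inl (by rw [Finset.card_image_of_injective _ σ.injective, h])
    · exact Or.inr (by rw [Finset.card_image_of_injective _ σ.injective, h])⟩

/-- The set `I_{(a,b)}` of quadruples realized by pairs of subsets of sizes `a`, `b`. -/
def quadSet (m : ℕ) (x0 : Finset (Fin (2*m+1))) (a b : ℕ) : Set (ℤ × ℤ × ℤ × ℤ) :=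
  {q | ∃ y z : Finset (Fin (2*m+1)), y.card = a ∧ z.card = b ∧ rho x0 y z = q}

/-- The orbit indicator matrix `N_{(a,b)}^q`. -/
noncomputable def orbitMatrix (m : ℕ) (x0 : Finset (Fin (2*m+1))) (a b : ℕ) (q : ℤ × ℤ × ℤ × ℤ) :
    Matrix (DoubledOddVertex m) (DoubledOddVertex m) ℂ :=
  Matrix.of fun y z =>
    if y.val.card = a ∧ z.val.card = b ∧ rho x0 y.val z.val = q then 1 else 0

/-- The centralizer algebra `𝒜` (as a subspace of matrices). -/
noncomputable def centralizer (m : ℕ) (x0 : Finset (Fin (2*m+1))) :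
    Submodule ℂ (Matrix (DoubledOddVertex m) (DoubledOddVertex m) ℂ) where
  carrier := {M | ∀ σ : Equiv.Perm (Fin (2*m+1)), x0.image σ = x0 →
    ∀ y z : DoubledOddVertex m, M (permAct m σ y) (permAct m σ z) = M y z}
  add_mem' := by
    intro a b ha hb σ hσ y z
    simp only [Matrix.add_apply, ha σ hσ y z, hb σ hσ y z]
  zero_mem' := by intro σ hσ y z; rfl
  smul_mem' := by
    intro c M hM σ hσ y z
    simp only [Matrix.smul_apply, hM σ hσ y z]

/-- The set of all orbit indicator matrices of the four types. -/
def orbitMatrices (m : ℕ) (x0 : Finset (Fin (2*m+1))) :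
    Set (Matrix (DoubledOddVertex m) (DoubledOddVertex m) ℂ) :=
  {M | ∃ a b : ℕ,
    ((a, b) = (m, m) ∨ (a, b) = (m, m+1) ∨ (a, b) = (m+1, m) ∨ (a, b) = (m+1, m+1)) ∧
    ∃ q ∈ quadSet m x0 a b, M = orbitMatrix m x0 a b q}

theorem stmt_8 (m : ℕ) (hm : 1 ≤ m) (x0 : Finset (Fin (2*m+1))) (hx0 : x0.card = m) :
    LinearIndependent ℂ
      ((↑) : orbitMatrices m x0 → Matrix (DoubledOddVertex m) (DoubledOddVertex m) ℂ) ∧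
    Submodule.span ℂ (orbitMatrices m x0) = centralizer m x0 := by
  classical
  constructor
  · -- linear independence
    rw [linearIndependent_iff']
    intro s g hsum i hi
    obtain ⟨a, b, hab, q, hq, hMval⟩ := i.2
    obtain ⟨yw, zw, hyc, hzc, hrq⟩ := hq
    have ha : a = m ∨ a = m + 1 := by
      rcases hab with h | h | h | h <;> rw [Prod.mk.injEq] at h <;> omega
    have hb : b = m ∨ b = m + 1 := by
      rcases hab with h | h | h | h <;> rw [Prod.mk.injEq] at h <;> omega
    have hYm : yw.card = m ∨ yw.card = m + 1 := by
      rcases ha with h | h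
      · exact Or.inl (hyc.trans h)
      · exact Or.inr (hyc.trans h)
    have hZm : zw.card = m ∨ zw.card = m + 1 := by
      rcases hb with h | h
      · exact Or.inl (hzc.trans h)
      · exact Or.inr (hzc.trans h)
    set Y : DoubledOddVertex m := ⟨yw, hYm⟩ with hYdef
    set Z : DoubledOddVertex m := ⟨zw, hZm⟩ with hZdef
    have hent := congrArg (fun N => N Y Z) hsum
    simp only [Matrix.sum_apply, Matrix.smul_apply, smul_eq_mul, Matrix.zero_apply] at hent
    have hside : ∀ j ∈ s, j ≠ i →
        g j * (j : Matrix (DoubledOddVertex m) (DoubledOddVertex m) ℂ) Y Z = 0 := by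
      intro j _ hji
      obtain ⟨a', b', hab', q', hq', hj⟩ := j.2
      rw [hj]
      simp only [orbitMatrix, Matrix.of_apply]
      by_cases hc : Y.val.card = a' ∧ Z.val.card = b' ∧ rho x0 Y.val Z.val = q'
      · exfalso
        apply hji
        apply Subtype.ext
        obtain ⟨c1, c2, c3⟩ := hc
        have e1 : a' = a := c1.symm.trans hyc
        have e2 : b' = b := c2.symm.trans hzc
        have e3 : q' = q := c3.symm.trans hrq
        rw [hj, hMval, e1, e2, e3]
      · rw [if_neg hc, mul_zero]
    rw [Finset.sum_eq_single_of_mem i hi hside] at hent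
    rw [hMval] at hent
    simp only [orbitMatrix, Matrix.of_apply] at hent
    rw [if_pos ⟨hyc, hzc, hrq⟩, mul_one] at hent
    exact hent
  · -- span = centralizer
    apply le_antisymm
    · rw [Submodule.span_le]
      rintro M ⟨a, b, hab, q, hq, rfl⟩
      intro σ hσ y z
      have hcy : (permAct m σ y).val.card = y.val.card :=
        Finset.card_image_of_injective _ σ.injective
      have hcz : (permAct m σ z).val.card = z.val.card :=
        Finset.card_image_of_injective _ σ.injective
      have e1 : (x0 ∩ (permAct m σ y).val).card = (x0 ∩ y.val).card := by
        show (x0 ∩ y.val.image σ).card = _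
        conv_lhs => rw [← hσ]
        rw [← Finset.image_inter _ _ σ.injective,
          Finset.card_image_of_injective _ σ.injective]
      have e2 : (x0 ∩ (permAct m σ z).val).card = (x0 ∩ z.val).card := by
        show (x0 ∩ z.val.image σ).card = _
        conv_lhs => rw [← hσ]
        rw [← Finset.image_inter _ _ σ.injective,
          Finset.card_image_of_injective _ σ.injective]
      have e3 : ((permAct m σ y).val ∩ (permAct m σ z).val).card = (y.val ∩ z.val).card := by
        show (y.val.image σ ∩ z.val.image σ).card = _
        rw [← Finset.image_inter _ _ σ.injective,
          Finset.card_image_of_injective _ σ.injective]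
      have e4 : (x0 ∩ (permAct m σ y).val ∩ (permAct m σ z).val).card
          = (x0 ∩ y.val ∩ z.val).card := by
        show (x0 ∩ y.val.image σ ∩ z.val.image σ).card = _
        conv_lhs => rw [← hσ]
        rw [← Finset.image_inter _ _ σ.injective, ← Finset.image_inter _ _ σ.injective,
          Finset.card_image_of_injective _ σ.injective]
      have hrho : rho x0 (permAct m σ y).val (permAct m σ z).val = rho x0 y.val z.val := by
        simp only [rho]
        rw [e1, e2, e3, e4]
      show (orbitMatrix m x0 a b q) _ _ = (orbitMatrix m x0 a b q) _ _
      simp only [orbitMatrix, Matrix.of_apply, hcy, hcz, hrho]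
    · intro M hM
      have key : ∀ p p' : DoubledOddVertex m × DoubledOddVertex m,
          p.1.val.card = p'.1.val.card → p.2.val.card = p'.2.val.card →
          rho x0 p.1.val p.2.val = rho x0 p'.1.val p'.2.val →
          M p.1 p.2 = M p'.1 p'.2 := by
        rintro ⟨y, z⟩ ⟨y', z'⟩ h1 h2 h3
        simp only [rho, Prod.mk.injEq, Nat.cast_inj] at h3
        obtain ⟨c1, c2, c3, c4⟩ := h3
        obtain ⟨σ, hA, hB, hC⟩ :=
          exists_perm_triple x0 y.val z.val y'.val z'.val h1 h2 c1 c2 c3 c4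
        have hinv := hM σ hA y z
        have hy : permAct m σ y = y' := Subtype.ext hB
        have hz : permAct m σ z = z' := Subtype.ext hC
        rw [hy, hz] at hinv
        exact hinv.symm
      set K : DoubledOddVertex m × DoubledOddVertex m → ℕ × ℕ × (ℤ × ℤ × ℤ × ℤ) :=
        fun p => (p.1.val.card, p.2.val.card, rho x0 p.1.val p.2.val) with hK
      set keys := Finset.image K Finset.univ with hkeys
      have hrep : ∀ k : {k // k ∈ keys}, ∃ p, K p = k.1 := fun k => by
        obtain ⟨p, _, hp⟩ := Finset.mem_image.mp k.2
        exact ⟨p, hp⟩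
      choose rep hrepk using hrep
      have hMs : M = ∑ k ∈ keys.attach,
          M (rep k).1 (rep k).2 • orbitMatrix m x0 k.1.1 k.1.2.1 k.1.2.2 := by
        ext Y Z
        rw [Matrix.sum_apply]
        have hmem : (⟨K (Y, Z), Finset.mem_image_of_mem K (Finset.mem_univ _)⟩ : {k // k ∈ keys})
            ∈ keys.attach := Finset.mem_attach _ _
        rw [Finset.sum_eq_single_of_mem _ hmem ?side]
        case side =>
          intro j _ hj
          simp only [Matrix.smul_apply, orbitMatrix, Matrix.of_apply, smul_eq_mul]
          by_cases hc : Y.val.card = j.1.1 ∧ Z.val.card = j.1.2.1 ∧ rho x0 Y.val Z.val = j.1.2.2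
          · exfalso
            apply hj
            apply Subtype.ext
            show j.1 = K (Y, Z)
            obtain ⟨c1, c2, c3⟩ := hc
            rw [hK]
            exact Prod.ext_iff.mpr ⟨c1.symm, Prod.ext_iff.mpr ⟨c2.symm, c3.symm⟩⟩
          · rw [if_neg hc, mul_zero]
        · simp only [Matrix.smul_apply, orbitMatrix, Matrix.of_apply, smul_eq_mul]
          rw [if_pos (show Y.val.card = (K (Y, Z)).1 ∧ Z.val.card = (K (Y, Z)).2.1 ∧ rho x0 Y.val Z.val = (K (Y, Z)).2.2 from ⟨rfl, rfl, rfl⟩), mul_one]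
          have h := hrepk ⟨K (Y, Z), Finset.mem_image_of_mem K (Finset.mem_univ _)⟩
          exact (key _ (Y, Z) (congrArg (fun x => x.1) h) (congrArg (fun x => x.2.1) h)
            (congrArg (fun x => x.2.2) h)).symm
      rw [hMs]
      apply Submodule.sum_mem
      intro k _
      apply Submodule.smul_mem
      apply Submodule.subset_span
      obtain ⟨p, _, hp⟩ := Finset.mem_image.mp k.2
      have ea : k.1.1 = p.1.val.card := (congrArg (fun x => x.1) hp).symm
      have eb : k.1.2.1 = p.2.val.card := (congrArg (fun x => x.2.1) hp).symm
      refine ⟨k.1.1, k.1.2.1, ?_, k.1.2.2, ⟨p.1.val, p.2.val, ea.symm, eb.symm,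
        congrArg (fun x => x.2.2) hp⟩, rfl⟩
      rcases p.1.2 with h1 | h1 <;> rcases p.2.2 with h2 | h2
      · left; rw [ea, eb, h1, h2]
      · right; left; rw [ea, eb, h1, h2]
      · right; right; left; rw [ea, eb, h1, h2]
      · right; right; right; rw [ea, eb, h1, h2]
end

section
/- For every m ≥ 1, the ℂ-linear span 𝒜₁ of the type I matrices N_{(m,m)}^q, q ∈ I_{(m,m)}, is closed under matrix multiplication; that is, 𝒜₁ is a (possibly non-unital) subalgebra of Mat_X(ℂ): for all M, N ∈ 𝒜₁, the product M·N lies in 𝒜₁. -/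
/-! The span of the type I matrices is exactly the space of matrices that are supported on the
pairs of `m`-subsets and invariant under the stabilizer of `x0` in `Sym(S)`. Indeed the stabilizer
acts transitively on pairs `(y, z)` with prescribed sizes and prescribed `ρ(y, z)`, since these
numbers determine the sizes of the eight Venn regions of `(x0, y, z)`. Both conditions are
visibly preserved by matrix products. -/

open Finset

section VennRegions

variable {α : Type*} [DecidableEq α]

def memPart (U A : Finset α) (b : Bool) : Finset α :=
  U.filter fun a => decide (a ∈ A) = b

lemma card_memPart_eq {U A U' A' : Finset α} (hU : #U = #U') (hUA : #(U ∩ A) = #(U' ∩ A'))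
    (b : Bool) : #(memPart U A b) = #(memPart U' A' b) := by
  cases b
  · have hsdiff : ∀ V B : Finset α, memPart V B false = V \ B := fun V B => by
      ext a; simp [memPart]
    rw [hsdiff, hsdiff, card_sdiff, card_sdiff, inter_comm A, inter_comm A', hU, hUA]
  · simpa [memPart, filter_mem_eq_inter, inter_comm] using hUA

lemma memPart_inter (U A C : Finset α) (b : Bool) :
    memPart U A b ∩ C = memPart (U ∩ C) A b := by
  ext a; simp only [memPart, mem_inter, mem_filter]; tauto

lemma image_perm_eq {σ : Equiv.Perm α} {s t : Finset α} (h : ∀ a, σ a ∈ t ↔ a ∈ s) :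
    s.image σ = t := by
  ext b
  rw [mem_image]
  refine ⟨?_, fun hb => ⟨σ.symm b, (h _).1 (by simpa using hb), σ.apply_symm_apply b⟩⟩
  rintro ⟨a, ha, rfl⟩
  exact (h a).2 ha

variable [Fintype α]

lemma card_memPart_memPart_memPart_eq {x y z y' z' : Finset α} (hy : #y = #y') (hz : #z = #z')
    (hxy : #(x ∩ y) = #(x ∩ y')) (hxz : #(x ∩ z) = #(x ∩ z')) (hyz : #(y ∩ z) = #(y' ∩ z'))
    (hxyz : #(x ∩ y ∩ z) = #(x ∩ y' ∩ z')) (b₀ b₁ b₂ : Bool) :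
    #(memPart (memPart (memPart univ x b₀) y b₁) z b₂) =
      #(memPart (memPart (memPart univ x b₀) y' b₁) z' b₂) := by
  have comm : ∀ s t : Finset α, #(s ∩ x) = #(t ∩ x) ↔ #(x ∩ s) = #(x ∩ t) := by
    simp [inter_comm x]
  have h_univ := card_memPart_eq (U := univ) (A := x) rfl rfl b₀
  have h_y := card_memPart_eq (A := x) hy ((comm _ _).2 hxy) b₀
  have h_z := card_memPart_eq (A := x) hz ((comm _ _).2 hxz) b₀
  have swap : ∀ s t : Finset α, s ∩ t ∩ x = x ∩ t ∩ s := fun s t => by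
    ext; simp only [mem_inter]; tauto
  have h_zy := card_memPart_eq (U := z ∩ y) (U' := z' ∩ y') (A := x)
    (by rwa [inter_comm z, inter_comm z']) (by rwa [swap, swap]) b₀
  have h₂ : ∀ {C C' : Finset α}, #(memPart C x b₀) = #(memPart C' x b₀) →
      #(memPart (C ∩ y) x b₀) = #(memPart (C' ∩ y') x b₀) →
      #(memPart (memPart C x b₀) y b₁) = #(memPart (memPart C' x b₀) y' b₁) :=
    fun hC hCy => card_memPart_eq hC (by rwa [memPart_inter, memPart_inter]) b₁
  refine card_memPart_eq (h₂ h_univ (by simpa using h_y)) ?_ b₂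
  rw [memPart_inter, memPart_inter, memPart_inter, memPart_inter]
  exact h₂ (by simpa using h_z) (by simpa using h_zy)

theorem exists_perm_image_eq {x y z y' z' : Finset α} (hy : #y = #y') (hz : #z = #z')
    (hxy : #(x ∩ y) = #(x ∩ y')) (hxz : #(x ∩ z) = #(x ∩ z')) (hyz : #(y ∩ z) = #(y' ∩ z'))
    (hxyz : #(x ∩ y ∩ z) = #(x ∩ y' ∩ z')) :
    ∃ σ : Equiv.Perm α, x.image σ = x ∧ y.image σ = y' ∧ z.image σ = z' := by
  let key (s t : Finset α) (a : α) : Bool × Bool × Bool :=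
    (decide (a ∈ x), decide (a ∈ s), decide (a ∈ t))
  have h_fiber : ∀ p, Fintype.card {a // key y z a = p} = Fintype.card {a // key y' z' a = p} := by
    rintro ⟨b₀, b₁, b₂⟩
    have hpart : ∀ s t : Finset α, univ.filter (fun a => key s t a = (b₀, b₁, b₂)) =
        memPart (memPart (memPart univ x b₀) s b₁) t b₂ := fun s t => by
      ext a; simp [key, memPart, and_assoc]
    rw [Fintype.card_subtype, Fintype.card_subtype, hpart, hpart]
    exact card_memPart_memPart_memPart_eq hy hz hxy hxz hyz hxyz b₀ b₁ b₂
  -- a permutation matching the Venn regions of `(x, y, z)` with those of `(x, y', z')`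
  let σ := Equiv.ofFiberEquiv fun p => Fintype.equivOfCardEq (h_fiber p)
  have hσ : ∀ a, key y' z' (σ a) = key y z a := Equiv.ofFiberEquiv_map _
  simp only [key, Prod.mk.injEq, decide_eq_decide] at hσ
  exact ⟨σ, image_perm_eq fun a => (hσ a).1, image_perm_eq fun a => (hσ a).2.1,
    image_perm_eq fun a => (hσ a).2.2⟩

end VennRegions

section BlockSupported

variable {ι R : Type*} [Semiring R]

def blockSupported (p : ι → Prop) : Submodule R (Matrix ι ι R) where
  carrier := {M | ∀ i j, ¬(p i ∧ p j) → M i j = 0}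
  add_mem' hM hN i j h := by simp [hM i j h, hN i j h]
  zero_mem' _ _ _ := rfl
  smul_mem' c M hM i j h := by simp [hM i j h]

lemma mul_mem_blockSupported [Fintype ι] {p : ι → Prop} {M N : Matrix ι ι R}
    (hM : M ∈ blockSupported p) (hN : N ∈ blockSupported p) : M * N ∈ blockSupported p := by
  intro i j hij
  rw [Matrix.mul_apply]
  refine sum_eq_zero fun k _ => ?_
  by_cases hi : p i
  · rw [hN k j fun h => hij ⟨hi, h.2⟩, mul_zero]
  · rw [hM i k fun h => hi h.1, zero_mul]

end BlockSupported

def permActEquiv (m : ℕ) (σ : Equiv.Perm (Fin (2*m+1))) :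
    DoubledOddVertex m ≃ DoubledOddVertex m where
  toFun := permAct m σ
  invFun := permAct m σ.symm
  left_inv y := Subtype.ext (by simp [permAct, image_image])
  right_inv y := Subtype.ext (by simp [permAct, image_image])

lemma card_permAct (m : ℕ) (σ : Equiv.Perm (Fin (2*m+1))) (y : DoubledOddVertex m) :
    #(permAct m σ y).1 = #y.1 :=
  card_image_of_injective _ σ.injective

lemma rho_image {n : ℕ} {x0 : Finset (Fin n)} {σ : Equiv.Perm (Fin n)} (hσ : x0.image σ = x0)
    (y z : Finset (Fin n)) : rho x0 (y.image σ) (z.image σ) = rho x0 y z := by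
  have h_inter : ∀ s t : Finset (Fin n), s.image σ ∩ t.image σ = (s ∩ t).image σ :=
    fun s t => (image_inter _ _ σ.injective).symm
  have h_card : ∀ s : Finset (Fin n), #(s.image σ) = #s :=
    fun s => card_image_of_injective _ σ.injective
  conv_lhs => rw [← hσ]
  simp only [rho, h_inter, h_card]

section TypeI

variable (m : ℕ) (x0 : Finset (Fin (2*m+1)))

lemma mul_mem_centralizer {M N : Matrix (DoubledOddVertex m) (DoubledOddVertex m) ℂ}
    (hM : M ∈ centralizer m x0) (hN : N ∈ centralizer m x0) : M * N ∈ centralizer m x0 := by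
  intro σ hσ y z
  let e := permActEquiv m σ
  have hM' : M.submatrix e e = M := Matrix.ext (hM σ hσ)
  have hN' : N.submatrix e e = N := Matrix.ext (hN σ hσ)
  change (M * N).submatrix e e y z = (M * N) y z
  rw [← Matrix.submatrix_mul_equiv M N e e e, hM', hN']

lemma orbitMatrix_mem_centralizer (q : ℤ × ℤ × ℤ × ℤ) :
    orbitMatrix m x0 m m q ∈ centralizer m x0 := by
  intro σ hσ y z
  simp only [orbitMatrix, Matrix.of_apply, card_permAct]
  simp only [permAct, rho_image hσ]

lemma orbitMatrix_mem_blockSupported (q : ℤ × ℤ × ℤ × ℤ) :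
    orbitMatrix m x0 m m q ∈ blockSupported fun y : DoubledOddVertex m => #y.1 = m := by
  intro y z hyz
  simp only [orbitMatrix, Matrix.of_apply]
  exact if_neg fun h => hyz ⟨h.1, h.2.1⟩

lemma apply_eq_of_rho_eq {M : Matrix (DoubledOddVertex m) (DoubledOddVertex m) ℂ}
    (hM : M ∈ centralizer m x0) {y z y' z' : DoubledOddVertex m} (hy : #y.1 = #y'.1)
    (hz : #z.1 = #z'.1) (hρ : rho x0 y.1 z.1 = rho x0 y'.1 z'.1) : M y z = M y' z' := by
  simp only [rho, Prod.mk.injEq, Nat.cast_inj] at hρ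
  obtain ⟨σ, hσ, hσy, hσz⟩ := exists_perm_image_eq hy hz hρ.1 hρ.2.1 hρ.2.2.1 hρ.2.2.2
  rw [← hM σ hσ y z]
  congr <;> exact Subtype.ext ‹_›

lemma mem_span_orbitMatrix_of_eq_comp_rho {M : Matrix (DoubledOddVertex m) (DoubledOddVertex m) ℂ}
    (hM : M ∈ blockSupported fun y : DoubledOddVertex m => #y.1 = m) (f : ℤ × ℤ × ℤ × ℤ → ℂ)
    (hf : ∀ y z : DoubledOddVertex m, #y.1 = m → #z.1 = m → M y z = f (rho x0 y.1 z.1)) :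
    M ∈ Submodule.span ℂ {B | ∃ q ∈ quadSet m x0 m m, B = orbitMatrix m x0 m m q} := by
  let Q : Finset (ℤ × ℤ × ℤ × ℤ) :=
    (univ.filter fun p : DoubledOddVertex m × DoubledOddVertex m => #p.1.1 = m ∧ #p.2.1 = m).image
      fun p => rho x0 p.1.1 p.2.1
  have hM_eq : M = ∑ q ∈ Q, f q • orbitMatrix m x0 m m q := by
    ext y z
    simp only [Matrix.sum_apply, Matrix.smul_apply, orbitMatrix, Matrix.of_apply, smul_eq_mul,
      mul_ite, mul_one, mul_zero]
    by_cases hyz : #y.1 = m ∧ #z.1 = m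
    · have hρ : rho x0 y.1 z.1 ∈ Q := mem_image.2 ⟨(y, z), by simpa using hyz, rfl⟩
      simp [hyz, hρ, hf y z hyz.1 hyz.2]
    · rw [hM y z hyz]
      exact (sum_eq_zero fun q _ => if_neg fun h => hyz ⟨h.1, h.2.1⟩).symm
  rw [hM_eq]
  refine Submodule.sum_mem _ fun q hq => Submodule.smul_mem _ _ (Submodule.subset_span ⟨q, ?_, rfl⟩)
  obtain ⟨⟨y, z⟩, hyz, rfl⟩ := mem_image.1 hq
  exact ⟨y.1, z.1, (mem_filter.1 hyz).2.1, (mem_filter.1 hyz).2.2, rfl⟩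

lemma span_orbitMatrix_eq :
    Submodule.span ℂ {B | ∃ q ∈ quadSet m x0 m m, B = orbitMatrix m x0 m m q} =
      centralizer m x0 ⊓ blockSupported fun y : DoubledOddVertex m => #y.1 = m := by
  refine le_antisymm (Submodule.span_le.2 ?_) ?_
  · rintro _ ⟨q, -, rfl⟩
    exact ⟨orbitMatrix_mem_centralizer m x0 q, orbitMatrix_mem_blockSupported m x0 q⟩
  · rintro M ⟨hM_inv, hM_supp⟩
    -- on the block, `M` is a function of `ρ`: extend it from the realized quadruples by `0`
    let ρ : {p : DoubledOddVertex m × DoubledOddVertex m // #p.1.1 = m ∧ #p.2.1 = m} →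
        ℤ × ℤ × ℤ × ℤ := fun p => rho x0 p.1.1.1 p.1.2.1
    have h_factors : (fun p => M p.1.1 p.1.2).FactorsThrough ρ := fun p p' h =>
      apply_eq_of_rho_eq m x0 hM_inv (p.2.1.trans p'.2.1.symm) (p.2.2.trans p'.2.2.symm) h
    exact mem_span_orbitMatrix_of_eq_comp_rho m x0 hM_supp _
      fun y z hy hz => (h_factors.extend_apply 0 ⟨(y, z), hy, hz⟩).symm

end TypeI

theorem stmt_10_general (m : ℕ) (x0 : Finset (Fin (2*m+1))) :
    ∀ M N : Matrix (DoubledOddVertex m) (DoubledOddVertex m) ℂ,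
      M ∈ Submodule.span ℂ
          {B | ∃ q ∈ quadSet m x0 m m, B = orbitMatrix m x0 m m q} →
      N ∈ Submodule.span ℂ
          {B | ∃ q ∈ quadSet m x0 m m, B = orbitMatrix m x0 m m q} →
      M * N ∈ Submodule.span ℂ
          {B | ∃ q ∈ quadSet m x0 m m, B = orbitMatrix m x0 m m q} := by
  intro M N hM hN
  rw [span_orbitMatrix_eq] at hM hN ⊢
  exact ⟨mul_mem_centralizer m x0 hM.1 hN.1, mul_mem_blockSupported hM.2 hN.2⟩

theorem stmt_10 (m : ℕ) (hm : 1 ≤ m) (x0 : Finset (Fin (2*m+1))) (hx0 : x0.card = m) :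
    ∀ M N : Matrix (DoubledOddVertex m) (DoubledOddVertex m) ℂ,
      M ∈ Submodule.span ℂ
          {B | ∃ q ∈ quadSet m x0 m m, B = orbitMatrix m x0 m m q} →
      N ∈ Submodule.span ℂ
          {B | ∃ q ∈ quadSet m x0 m m, B = orbitMatrix m x0 m m q} →
      M * N ∈ Submodule.span ℂ
          {B | ∃ q ∈ quadSet m x0 m m, B = orbitMatrix m x0 m m q} :=
  stmt_10_general m x0
end

section
/- For every natural number m, the identity ∑_{d=0}^{m} (m − d − ⌈(m−d)/2⌉ + 1)·(2d+2)² = 4·C(m+4, 4) holds, where ⌈·⌉ denotes the ceiling, C(m+4,4) is a binomial coefficient, and m − d − ⌈(m−d)/2⌉ + 1 = ⌊(m−d)/2⌋ + 1. -/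
/-!
Splitting the sum over `d ≤ m + 2` into the terms `d ≤ m`, whose weights `⌊(m + 2 - d)/2⌋ + 1` exceed
those for `m` by one, and the two top terms of weight one, gives the recurrence
`S (m + 2) = S m + ∑_{d ≤ m + 2} (2d + 2)²`. The sum of squares has a cubic closed form, and
`4·C(m + 4, 4) = (m + 1)(m + 2)(m + 3)(m + 4)/6` satisfies the same recurrence and initial values.
-/

open Finset

lemma Nat.add_four_choose_four_mul (n : ℕ) :
    (n + 4).choose 4 * 24 = (n + 1) * (n + 2) * (n + 3) * (n + 4) := by
  have h := Nat.ascFactorial_eq_factorial_mul_choose n 4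
  simp only [Nat.ascFactorial_succ, Nat.ascFactorial_zero, Nat.factorial] at h
  linarith

lemma sum_range_two_mul_add_two_sq (n : ℕ) :
    (∑ d ∈ range n, (2 * d + 2) ^ 2) * 3 = 2 * n * (n + 1) * (2 * n + 1) := by
  induction n with
  | zero => simp
  | succ k ih =>
    rw [sum_range_succ]
    nlinarith [ih]

lemma sum_range_half_succ_smul_add_two {M : Type*} [AddCommMonoid M] (f : ℕ → M) (m : ℕ) :
    ∑ d ∈ range (m + 3), ((m + 2 - d) / 2 + 1) • f d =
      ∑ d ∈ range (m + 1), ((m - d) / 2 + 1) • f d + ∑ d ∈ range (m + 3), f d := by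
  have hlow : ∑ d ∈ range (m + 1), ((m + 2 - d) / 2 + 1) • f d =
      ∑ d ∈ range (m + 1), (((m - d) / 2 + 1) • f d + f d) := by
    refine sum_congr rfl fun d hd => ?_
    rw [mem_range] at hd
    rw [show (m + 2 - d) / 2 + 1 = ((m - d) / 2 + 1) + 1 by omega, add_smul, one_smul]
  rw [sum_range_succ, sum_range_succ, hlow, sum_add_distrib, sum_range_succ f (m + 2),
    sum_range_succ f (m + 1),
    show (m + 2 - (m + 1)) / 2 + 1 = 1 by omega, show (m + 2 - (m + 2)) / 2 + 1 = 1 by omega,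
    one_smul, one_smul]
  abel

lemma sum_range_half_succ_mul_two_mul_add_two_sq (m : ℕ) :
    ∑ d ∈ range (m + 1), ((m - d) / 2 + 1) * (2 * d + 2) ^ 2 = 4 * (m + 4).choose 4 := by
  induction m using Nat.twoStepInduction with
  | zero => decide
  | one => decide
  | more k ih _ =>
    have hrec := sum_range_half_succ_smul_add_two (fun d => (2 * d + 2) ^ 2) k
    simp only [smul_eq_mul] at hrec
    rw [hrec, ih]
    have hk := Nat.add_four_choose_four_mul k
    have hk2 := Nat.add_four_choose_four_mul (k + 2)
    have hsq := sum_range_two_mul_add_two_sq (k + 3)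
    linarith

theorem stmt_15 (m : ℕ) :
    (∀ d : ℕ, d ≤ m → m - d - (m - d + 1) / 2 + 1 = (m - d) / 2 + 1) ∧
    (Finset.range (m+1)).sum
        (fun d => (m - d - (m - d + 1) / 2 + 1) * (2*d + 2)^2) =
      4 * (m+4).choose 4 := by
  have hweight : ∀ d : ℕ, d ≤ m → m - d - (m - d + 1) / 2 + 1 = (m - d) / 2 + 1 :=
    fun d _ => by omega
  refine ⟨hweight, ?_⟩
  rw [← sum_range_half_succ_mul_two_mul_add_two_sq m]
  exact sum_congr rfl fun d hd => by rw [hweight d (Nat.lt_succ_iff.mp (mem_range.mp hd))]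
end
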